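/- arXiv:2107.01850 — 11 statements merged into one kernel-verified Lean document; each statement's English description precedes it below -/
import Mathlib

section
/- For any directed acyclic graph G on vertex set [p] equipped with a structural causal model and any target mean vector q ∈ ℝ^p, there exists a unique shift intervention I* (a set of perturbation targets together with deterministic shift values) such that the mean of the post-intervention distribution equals q. -/
/-!
The mean of the shifted model is triangular in the shift: `𝔼 Xᵢ = gᵢ(a) + aᵢ`, where
`gᵢ(a) = 𝔼 Fᵢ(X_{pa(i)})` only involves the shifts at strict ancestors of `i`. Solving
`aᵢ = qᵢ - gᵢ(a)` is then a recursion along the (well-founded) ancestor relation, whose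
solution exists and is unique.
-/

open MeasureTheory Relation

theorem WellFounded.existsUnique_forall_eq_apply {ι β : Type*} [Nonempty β]
    {r : ι → ι → Prop} (hr : WellFounded r) (h : ι → (ι → β) → β)
    (hh : ∀ i a b, (∀ j, r j i → a j = b j) → h i a = h i b) :
    ∃! a : ι → β, ∀ i, a i = h i a := by
  classical
  let extend (i : ι) (rec : ∀ j, r j i → β) : ι → β :=
    fun j => if hj : r j i then rec j hj else Classical.arbitrary β
  refine ⟨hr.fix fun i rec => h i (extend i rec), fun i => ?_, fun b hb => ?_⟩
  · rw [hr.fix_eq]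
    exact hh i _ _ fun j hj => by simp [extend, hj]
  · funext i
    induction i using hr.induction with
    | _ i ih =>
      rw [hb i, hr.fix_eq]
      exact hh i _ _ fun j hj => by simp [extend, hj, ih j hj]

section StructuralEquations

variable {ι Ω : Type*} {par : ι → ι → Prop} {F : ι → (ι → ℝ) → Ω → ℝ}
  {sol : (ι → ℝ) → ι → Ω → ℝ}

theorem sol_congr_of_eqOn_ancestors (hacyc : WellFounded par)
    (hdep : ∀ i (x y : ι → ℝ) ω, (∀ j, par j i → x j = y j) → F i x ω = F i y ω)
    (hsol : ∀ a i ω, sol a i ω = F i (fun j => sol a j ω) ω + a i)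
    {i : ι} {a b : ι → ℝ} (hab : ∀ j, ReflTransGen par j i → a j = b j) (ω : Ω) :
    sol a i ω = sol b i ω := by
  induction i using hacyc.induction generalizing a b with
  | _ i ih =>
    rw [hsol, hsol, hab i .refl]
    congr 1
    exact hdep i _ _ ω fun j hj =>
      ih j hj (fun k hk => hab k (hk.tail hj))

theorem sol_sub_shift_congr_of_eqOn_strictAncestors (hacyc : WellFounded par)
    (hdep : ∀ i (x y : ι → ℝ) ω, (∀ j, par j i → x j = y j) → F i x ω = F i y ω)
    (hsol : ∀ a i ω, sol a i ω = F i (fun j => sol a j ω) ω + a i)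
    {i : ι} {a b : ι → ℝ} (hab : ∀ j, TransGen par j i → a j = b j) (ω : Ω) :
    sol a i ω - a i = sol b i ω - b i := by
  rw [hsol a, hsol b, add_sub_cancel_right, add_sub_cancel_right]
  exact hdep i _ _ ω fun j hj =>
    sol_congr_of_eqOn_ancestors hacyc hdep hsol (fun k hk => hab k (.tail' hk hj)) ω

end StructuralEquations

/-- Encoding: a shift intervention is a vector `a : Fin p → ℝ`, its targets being `{i | a i ≠ 0}`. -/
theorem stmt_0 {p : ℕ} {Ω : Type*} [MeasurableSpace Ω] (μ : Measure Ω)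
    [IsProbabilityMeasure μ]
    (par : Fin p → Fin p → Prop) (hacyc : WellFounded par)
    (F : Fin p → (Fin p → ℝ) → Ω → ℝ)
    (hdep : ∀ (i : Fin p) (x y : Fin p → ℝ) (ω : Ω),
      (∀ j, par j i → x j = y j) → F i x ω = F i y ω)
    (sol : (Fin p → ℝ) → Fin p → Ω → ℝ)
    (hsol : ∀ (a : Fin p → ℝ) (i : Fin p) (ω : Ω),
      sol a i ω = F i (fun j => sol a j ω) ω + a i)
    (hint : ∀ (a : Fin p → ℝ) (i : Fin p), Integrable (sol a i) μ)
    (q : Fin p → ℝ) :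
    ∃! a : Fin p → ℝ, ∀ i : Fin p, (∫ ω, sol a i ω ∂μ) = q i := by
  have hmean : ∀ a i, ∫ ω, sol a i ω ∂μ = ∫ ω, (sol a i ω - a i) ∂μ + a i := fun a i => by
    rw [integral_sub (hint a i) (integrable_const _), integral_const, probReal_univ, one_smul,
      sub_add_cancel]
  have hfixed : ∀ a : Fin p → ℝ, (∀ i, ∫ ω, sol a i ω ∂μ = q i) ↔
      ∀ i, a i = q i - ∫ ω, (sol a i ω - a i) ∂μ :=
    fun a => forall_congr' fun i => by rw [hmean, eq_sub_iff_add_eq, add_comm]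
  rw [existsUnique_congr hfixed]
  refine hacyc.transGen.existsUnique_forall_eq_apply _ fun i a b hab => ?_
  congr 1
  exact integral_congr_ae (.of_forall
    (sol_sub_shift_congr_of_eqOn_strictAncestors hacyc hdep hsol hab))
end

section
/- Every undirected connected graph whose edges are oriented acyclically without creating any v-structure has exactly one source node: if an acyclic orientation of a connected undirected graph C has two distinct nodes i, j with no incoming edges, then the orientation contains an induced subgraph a → b ← c with a and c non-adjacent. -/
/-!
Follow a shortest path from `i` to `j`. Its first edge leaves the source `i`, and its last edge
cannot enter the source `j`, so somewhere two consecutive edges meet head to head, `w → x ← y`.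
Since the path is shortest, `w ≠ y` and `w`, `y` are not adjacent: this is a v-structure.
-/

namespace SimpleGraph

variable {V : Type*} (G : SimpleGraph V) (D : V → V → Prop)

def HasVStructure : Prop :=
  ∃ a b c : V, D a b ∧ D c b ∧ a ≠ c ∧ ¬ G.Adj a c

variable {G D}

theorem Walk.hasVStructure_of_forall_length_lt (horient : ∀ a b : V, G.Adj a b ↔ (D a b ∨ D b a))
    {j : V} (hj : ∀ a : V, ¬ D a j) {x : V} (q : G.Walk x j) {w : V} (hwx : D w x)
    (hshort : ∀ r : G.Walk w j, q.length < r.length) : G.HasVStructure D := by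
  induction q generalizing w with
  | nil => exact absurd hwx (hj w)
  | @cons x y _ hxy q ih =>
    by_cases hyx : D y x
    · refine ⟨w, x, y, hwx, hyx, ?_, fun hwy => ?_⟩
      · rintro rfl
        simpa using hshort q
      · simpa using hshort (.cons hwy q)
    · have hxy' : D x y := ((horient x y).mp hxy).resolve_right hyx
      have hwx' : G.Adj w x := (horient w x).mpr (.inl hwx)
      exact ih hj hxy' fun r => by simpa using hshort (.cons hwx' r)

end SimpleGraph

theorem stmt_3_general {V : Type*} (C : SimpleGraph V) (hconn : C.Connected)
    (D : V → V → Prop)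
    (horient : ∀ a b : V, C.Adj a b ↔ (D a b ∨ D b a))
    (i j : V) (hij : i ≠ j)
    (hi : ∀ a : V, ¬ D a i) (hj : ∀ a : V, ¬ D a j) :
    ∃ a b c : V, D a b ∧ D c b ∧ a ≠ c ∧ ¬ C.Adj a c := by
  obtain ⟨p, hp⟩ := hconn.exists_walk_length_eq_dist i j
  cases p with
  | nil => exact absurd rfl hij
  | @cons _ y _ hiy q =>
    have hiy' : D i y := ((horient i y).mp hiy).resolve_right (hi y)
    refine q.hasVStructure_of_forall_length_lt horient hj hiy' fun r => ?_
    have hq : q.length + 1 = C.dist i j := by simpa using hp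
    have := SimpleGraph.dist_le r
    omega

/-- An acyclic, v-structure-free orientation of a connected undirected
graph has exactly one source: if an acyclic orientation `D` of a connected graph `C` has
two distinct nodes `i ≠ j` with no incoming edges, then the orientation contains a
v-structure, i.e. an induced subgraph `a → b ← c` with `a` and `c` non-adjacent. -/
theorem stmt_3 {V : Type*} (C : SimpleGraph V) (hconn : C.Connected)
    (D : V → V → Prop)
    (horient : ∀ a b : V, C.Adj a b ↔ (D a b ∨ D b a))
    (hanti : ∀ a b : V, ¬ (D a b ∧ D b a))
    (hacyc : ∀ a : V, ¬ Relation.TransGen D a a)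
    (i j : V) (hij : i ≠ j)
    (hi : ∀ a : V, ¬ D a i) (hj : ∀ a : V, ¬ D a j) :
    ∃ a b c : V, D a b ∧ D c b ∧ a ≠ c ∧ ¬ C.Adj a c :=
  stmt_3_general C hconn D horient i j hij hi hj
end

section
/- Let C be an undirected chordal graph and K a maximal clique of C. For any linear ordering π_K of the vertices of K, there exists a topological ordering π of all vertices of C that begins with π_K, such that orienting every edge of C from its earlier endpoint to its later endpoint in π creates no v-structures (equivalently, the reverse of π is a perfect elimination ordering of C). -/
/-!
If a vertex `x` of a chordal graph has a non-neighbour `c₀`, let `C` be the component of `c₀`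
among the non-neighbours of `x` and `S` the set of outside vertices adjacent to `C`. Every
vertex of `S` is adjacent to `x`, and `S` is a clique: two non-adjacent vertices of `S`, joined
through `C` and through `x`, would lie on a cycle whose chords can only shorten the path through
`C`, ending in a chordless cycle. Induction on `C ∪ S`, which misses `x`, gives a vertex of `C`
that is simplicial in `G[C ∪ S]`, hence in `G`. So every vertex set not inside the clique `K`
has a simplicial vertex outside `K`. Removing such vertices one at a time and ranking each
above everything left, while `K` keeps the ranks `πK`, gives the ordering: the earlier
neighbours of a vertex are its neighbours in the set from which it was removed.
-/

/-- A graph is chordal if every cycle of length at least 4 has a chord. -/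
def IsChordal {V : Type*} (G : SimpleGraph V) : Prop :=
  ∀ (n : ℕ), 4 ≤ n → ∀ f : ZMod n → V, Function.Injective f →
    (∀ k : ZMod n, G.Adj (f k) (f (k + 1))) →
    ∃ k l : ZMod n, k ≠ l ∧ k + 1 ≠ l ∧ l + 1 ≠ k ∧ G.Adj (f k) (f l)

theorem List.IsChain.take_append_drop {α : Type*} {R : α → α → Prop} {l : List α}
    (hl : l.IsChain R) {i j : ℕ} (hij : i < j) (hj : j < l.length) (h : R l[i] l[j]) :
    (l.take (i + 1) ++ l.drop j).IsChain R := by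
  refine List.isChain_append.2 ⟨hl.take _, hl.drop _, fun a ha b hb => ?_⟩
  simp only [List.getLast?_take, List.head?_drop, List.getElem?_eq_getElem hj,
    Nat.add_sub_cancel, List.getElem?_eq_getElem (hij.trans hj)] at ha hb
  simp_all

theorem List.take_append_drop_sublist {α : Type*} (l : List α) {i j : ℕ} (hij : i ≤ j) :
    (l.take i ++ l.drop j).Sublist l := by
  conv_rhs => rw [← List.take_append_drop i l]
  rw [← Nat.add_sub_cancel' hij, ← List.drop_drop]
  exact (List.drop_sublist _ _).append_left _

namespace IsChordal

variable {V : Type*} {G : SimpleGraph V}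

theorem exists_chord (hG : IsChordal G) {cyc : List V} (hlen : 4 ≤ cyc.length)
    (hnd : cyc.Nodup) (hc : cyc.IsChain G.Adj) (hclose : G.Adj cyc[cyc.length - 1] cyc[0]) :
    ∃ i j, ∃ (hij : i + 1 < j) (hj : j < cyc.length), ¬(i = 0 ∧ j = cyc.length - 1) ∧
      G.Adj cyc[i] cyc[j] := by
  have : NeZero cyc.length := ⟨by omega⟩
  have : Fact (1 < cyc.length) := ⟨by omega⟩
  have hval (k : ZMod cyc.length) : (k + 1).val = (k.val + 1) % cyc.length := by
    rw [ZMod.val_add, ZMod.val_one]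
  have hcyc (k : ZMod cyc.length) :
      G.Adj (cyc[k.val]'k.val_lt) (cyc[(k + 1).val]'(k + 1).val_lt) := by
    have hk := k.val_lt
    simp_rw [hval]
    by_cases hk' : k.val + 1 < cyc.length
    · simp_rw [Nat.mod_eq_of_lt hk']
      exact List.isChain_iff_getElem.1 hc _ hk'
    · have hk'' : k.val + 1 = cyc.length := by omega
      simp_rw [hk'', Nat.mod_self]
      simpa [show k.val = cyc.length - 1 by omega] using hclose
  have hinj : Function.Injective fun k : ZMod cyc.length => cyc[k.val]'k.val_lt :=
    fun a b hab => ZMod.val_injective _ (hnd.getElem_inj_iff.1 hab)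
  have of_val_lt (a b : ZMod cyc.length) (hab : a.val < b.val) (ha : a + 1 ≠ b) (hb : b + 1 ≠ a)
      (h : G.Adj (cyc[a.val]'a.val_lt) (cyc[b.val]'b.val_lt)) :
      ∃ i j, ∃ (hij : i + 1 < j) (hj : j < cyc.length), ¬(i = 0 ∧ j = cyc.length - 1) ∧
        G.Adj cyc[i] cyc[j] := by
    have hb' := b.val_lt
    refine ⟨a.val, b.val, ?_, hb', fun ⟨h0, h1⟩ => hb (ZMod.val_injective _ ?_), h⟩
    · by_contra h'
      exact ha (ZMod.val_injective _ (by rw [hval, Nat.mod_eq_of_lt (by omega)]; omega))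
    · rw [hval, h0, h1, Nat.sub_add_cancel (by omega), Nat.mod_self]
  obtain ⟨a, b, hne, ha, hb, h⟩ := hG _ hlen _ hinj hcyc
  rcases Nat.lt_or_gt_of_ne (fun h => hne (ZMod.val_injective _ h)) with hab | hab
  · exact of_val_lt a b hab ha hb h
  · exact of_val_lt b a hab hb ha h.symm

theorem adj_of_isChain_outside_neighborSet (hG : IsChordal G) {x y₁ y₂ : V} (hx₁ : G.Adj x y₁)
    (hx₂ : G.Adj x y₂) (l : List V) (hc : (y₁ :: (l ++ [y₂])).IsChain G.Adj)
    (hnd : (y₁ :: (l ++ [y₂])).Nodup)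
    (hl : ∀ z ∈ l, z ≠ x ∧ ¬G.Adj x z) : G.Adj y₁ y₂ := by
  induction hn : l.length using Nat.strong_induction_on generalizing l with
  | _ n ih =>
  by_contra hne
  set Q := y₁ :: (l ++ [y₂])
  have hQlen : Q.length = l.length + 2 := by simp [Q]
  have hl0 : l ≠ [] := by
    rintro rfl
    exact hne (List.isChain_cons_cons.1 hc).1
  have hxQ : x ∉ Q := by
    simp only [Q, List.mem_cons, List.mem_append, List.not_mem_nil, or_false, not_or]
    exact ⟨hx₁.ne, fun h => (hl x h).1 rfl, hx₂.ne⟩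
  -- On the cycle `x :: Q`, a chord from `x` would end in `l`, and any chord other than `y₁y₂`
  -- shortcuts `l`.
  obtain ⟨i, j, hij, hj, hend, hadj⟩ := exists_chord hG (cyc := x :: Q)
    (by simp only [List.length_cons, hQlen]; have := List.length_pos_iff.2 hl0; omega)
    (List.nodup_cons.2 ⟨hxQ, hnd⟩) (List.isChain_cons_cons.2 ⟨hx₁, hc⟩)
    (by simpa [Q] using hx₂.symm)
  obtain ⟨q, rfl⟩ : ∃ q, j = q + 2 := ⟨j - 2, by omega⟩
  simp only [List.length_cons, hQlen] at hj hend
  rcases i with _ | p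
  · have hq : q < l.length := by omega
    simp only [Q, List.getElem_cons_zero, List.getElem_cons_succ,
      List.getElem_append_left hq] at hadj
    exact (hl _ (List.getElem_mem hq)).2 hadj
  · simp only [List.getElem_cons_succ] at hadj
    by_cases hpq : p = 0 ∧ q = l.length
    · obtain ⟨rfl, rfl⟩ := hpq
      exact hne (by simpa [Q] using hadj)
    have hshort := hc.take_append_drop (by omega) (by omega) hadj
    have hsub := Q.take_append_drop_sublist (by omega : p + 1 ≤ q + 1)
    have heq : Q.take (p + 1) ++ Q.drop (q + 1) = y₁ :: ((l.take p ++ l.drop q) ++ [y₂]) := by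
      simp only [Q, List.take_succ_cons, List.drop_succ_cons, List.cons_append,
        List.take_append_of_le_length (by omega : p ≤ l.length),
        List.drop_append_of_le_length (by omega : q ≤ l.length), List.append_assoc]
    rw [heq] at hshort hsub
    refine hne (ih _ ?_ _ hshort (hsub.nodup hnd)
      (fun z hz => hl z ((l.take_append_drop_sublist (by omega)).subset hz)) rfl)
    simp only [List.length_append, List.length_take, List.length_drop]; omega

end IsChordal

namespace SimpleGraph

variable {V : Type*} {G : SimpleGraph V}

def IsSimplicialIn (G : SimpleGraph V) (s : Set V) (v : V) : Prop :=
  G.IsClique (s ∩ G.neighborSet v)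

theorem exists_isSimplicialIn_not_mem {s : Set V}
    (hs : ∀ x ∈ s, ∀ c ∈ s, c ≠ x → ¬G.Adj x c →
      ∃ v ∈ s, v ≠ x ∧ ¬G.Adj x v ∧ G.IsSimplicialIn s v)
    {K : Set V} (hK : G.IsClique K) {w : V} (hw : w ∈ s) (hwK : w ∉ K) :
    ∃ v ∈ s, v ∉ K ∧ G.IsSimplicialIn s v := by
  by_cases hcl : G.IsClique s
  · exact ⟨w, hw, hwK, hcl.subset Set.inter_subset_left⟩
  obtain ⟨a, ha, b, hb, hab, hnadj⟩ : ∃ a ∈ s, ∃ b ∈ s, a ≠ b ∧ ¬G.Adj a b := by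
    simpa [SimpleGraph.IsClique, Set.Pairwise] using hcl
  -- The non-neighbours of such an `x` avoid `K`.
  obtain ⟨x, hx, c, hc, hcx, hxc, hxK⟩ : ∃ x ∈ s, ∃ c ∈ s, c ≠ x ∧ ¬G.Adj x c ∧
      ∀ y ∈ K, y ∈ s → y ≠ x → G.Adj x y := by
    by_cases h : ∃ y ∈ K, y ∈ s ∧ ∃ c ∈ s, c ≠ y ∧ ¬G.Adj y c
    · obtain ⟨y, hyK, hy, c, hc, hcy, hyc⟩ := h
      exact ⟨y, hy, c, hc, hcy, hyc, fun z hz _ hzy => hK hyK hz hzy.symm⟩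
    · push Not at h
      exact ⟨a, ha, b, hb, hab.symm, hnadj, fun y hyK hy hya => (h y hyK hy a ha hya.symm).symm⟩
  obtain ⟨v, hv, hvx, hxv, hsimp⟩ := hs x hx c hc hcx hxc
  exact ⟨v, hv, fun hvK => hxv (hxK v hvK hv hvx), hsimp⟩

theorem Reachable.mem_of_spanningCoe_induce {R : Set V} {a b : V}
    (h : ((⊤ : G.Subgraph).induce R).spanningCoe.Reachable a b) (ha : a ∈ R) : b ∈ R := by
  obtain ⟨p⟩ := h.symm
  cases p with
  | nil => exact ha
  | cons h _ => exact (by simpa using h : b ∈ R ∧ _ ∧ _).1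

def IsVStructureFreeOn (G : SimpleGraph V) (s : Set V) (ρ : V → ℕ) : Prop :=
  Set.InjOn ρ s ∧ ∀ b ∈ s, G.IsClique {a | a ∈ s ∧ G.Adj a b ∧ ρ a < ρ b}

theorem IsVStructureFreeOn.update [DecidableEq V] {s : Set V} {ρ : V → ℕ} {v : V} {M : ℕ}
    (h : G.IsVStructureFreeOn s ρ) (hv : G.IsSimplicialIn (insert v s) v)
    (hM : ∀ a ∈ s, ρ a < M) : G.IsVStructureFreeOn (insert v s) (Function.update ρ v M) := by
  refine ⟨fun a ha b hb hab => ?_, fun b hb => ?_⟩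
  · by_cases hav : a = v <;> by_cases hbv : b = v
    · rw [hav, hbv]
    · subst hav
      rw [Function.update_self, Function.update_of_ne hbv] at hab
      have := hM b (hb.resolve_left hbv)
      omega
    · subst hbv
      rw [Function.update_self, Function.update_of_ne hav] at hab
      have := hM a (ha.resolve_left hav)
      omega
    · rw [Function.update_of_ne hav, Function.update_of_ne hbv] at hab
      exact h.1 (ha.resolve_left hav) (hb.resolve_left hbv) hab
  · by_cases hbv : b = v
    · subst hbv
      refine hv.subset fun a ha => ?_
      exact ⟨ha.1, ha.2.1.symm⟩
    · have hbs := hb.resolve_left hbv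
      refine (h.2 b hbs).subset fun a ⟨ha, hab, hlt⟩ => ?_
      rw [Function.update_of_ne hbv] at hlt
      by_cases hav : a = v
      · subst hav
        rw [Function.update_self] at hlt
        have := hM b hbs
        omega
      · rw [Function.update_of_ne hav] at hlt
        exact ⟨ha.resolve_left hav, hab, hlt⟩

end SimpleGraph

namespace IsChordal

open SimpleGraph

variable {V : Type*} {G : SimpleGraph V}

theorem adj_of_reachable_outside_neighborSet (hG : IsChordal G) {R : Set V}
    {x y₁ y₂ c₁ c₂ : V} (hR : ∀ c ∈ R, c ≠ x ∧ ¬G.Adj x c) (hx₁ : G.Adj x y₁)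
    (hx₂ : G.Adj x y₂) (hne : y₁ ≠ y₂) (hy₁ : y₁ ∉ R) (hy₂ : y₂ ∉ R) (hc₁ : c₁ ∈ R)
    (h₁ : G.Adj y₁ c₁) (h₂ : G.Adj c₂ y₂)
    (hc : ((⊤ : G.Subgraph).induce R).spanningCoe.Reachable c₁ c₂) : G.Adj y₁ y₂ := by
  classical
  obtain ⟨p, hp⟩ := hc.exists_isPath
  have hpR (z : V) (hz : z ∈ p.support) : z ∈ R :=
    Reachable.mem_of_spanningCoe_induce ⟨p.takeUntil z hz⟩ hc₁
  refine hG.adj_of_isChain_outside_neighborSet hx₁ hx₂ p.support ?_ ?_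
    fun z hz => hR z (hpR z hz)
  · simpa using (Walk.cons h₁ ((p.mapLe (Subgraph.spanningCoe_le _)).concat h₂)).isChain_adj_support
  · have hy₁p : y₁ ∉ p.support := fun h => hy₁ (hpR _ h)
    have hy₂p : y₂ ∉ p.support := fun h => hy₂ (hpR _ h)
    refine List.nodup_cons.2 ⟨by simp [hy₁p, hne], ?_⟩
    exact List.nodup_append.2 ⟨hp.support_nodup, List.nodup_singleton _, by grind⟩

theorem exists_isSimplicialIn_not_adj (hG : IsChordal G) (s : Finset V) :
    ∀ x ∈ s, ∀ c ∈ s, c ≠ x → ¬G.Adj x c →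
      ∃ v ∈ s, v ≠ x ∧ ¬G.Adj x v ∧ G.IsSimplicialIn s v := by
  classical
  induction s using Finset.strongInduction with
  | H s ih =>
  intro x hx c₀ hc₀ hc₀x hxc₀
  set R : Set V := {c | c ∈ s ∧ c ≠ x ∧ ¬G.Adj x c}
  set H : SimpleGraph V := ((⊤ : G.Subgraph).induce R).spanningCoe
  set C := s.filter (H.Reachable c₀)
  set S := (s \ C).filter (fun y => ∃ c ∈ C, G.Adj y c)
  have hCR (c : V) (hc : c ∈ C) : c ∈ R :=
    (Finset.mem_filter.1 hc).2.mem_of_spanningCoe_induce ⟨hc₀, hc₀x, hxc₀⟩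
  have hSx (y : V) (hy : y ∈ S) : G.Adj x y := by
    obtain ⟨hy, c, hc, hyc⟩ := Finset.mem_filter.1 hy
    obtain ⟨hys, hyC⟩ := Finset.mem_sdiff.1 hy
    by_contra hxy
    have hyx : y ≠ x := by rintro rfl; exact (hCR c hc).2.2 hyc
    refine hyC (Finset.mem_filter.2 ⟨hys, (Finset.mem_filter.1 hc).2.trans ?_⟩)
    exact Adj.reachable (by simpa [H] using ⟨hCR c hc, ⟨hys, hyx, hxy⟩, hyc.symm⟩)
  have hS : G.IsClique (S : Set V) := by
    intro y₁ hy₁ y₂ hy₂ hne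
    obtain ⟨-, c₁, hc₁, hy₁c₁⟩ := Finset.mem_filter.1 hy₁
    obtain ⟨-, c₂, hc₂, hy₂c₂⟩ := Finset.mem_filter.1 hy₂
    exact hG.adj_of_reachable_outside_neighborSet (fun c hc => hc.2) (hSx y₁ hy₁)
      (hSx y₂ hy₂) hne (fun h => h.2.2 (hSx y₁ hy₁)) (fun h => h.2.2 (hSx y₂ hy₂))
      (hCR c₁ hc₁) hy₁c₁ hy₂c₂.symm
      ((Finset.mem_filter.1 hc₁).2.symm.trans (Finset.mem_filter.1 hc₂).2)
  have hsub : C ∪ S ⊂ s := by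
    refine (Finset.ssubset_iff_of_subset (Finset.union_subset (Finset.filter_subset _ _)
      ((Finset.filter_subset _ _).trans Finset.sdiff_subset))).2 ⟨x, hx, fun h => ?_⟩
    rcases Finset.mem_union.1 h with h | h
    · exact (hCR x h).2.1 rfl
    · exact (hSx x h).ne rfl
  have hc₀C : c₀ ∈ C := Finset.mem_filter.2 ⟨hc₀, Reachable.refl _⟩
  have hCS : Disjoint C S := Finset.disjoint_left.2 fun c hc hcS =>
    (Finset.mem_sdiff.1 (Finset.mem_filter.1 hcS).1).2 hc
  obtain ⟨v, hv, hvS, hsimp⟩ := exists_isSimplicialIn_not_mem (ih _ hsub) hS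
    (Finset.mem_union_left _ hc₀C) (Finset.disjoint_left.1 hCS hc₀C)
  have hvC : v ∈ C := (Finset.mem_union.1 hv).resolve_right hvS
  refine ⟨v, hsub.subset hv, (hCR v hvC).2.1, (hCR v hvC).2.2, hsimp.subset ?_⟩
  rintro a ⟨has, hva⟩
  refine ⟨Finset.mem_union.2 ?_, hva⟩
  by_cases haC : a ∈ C
  · exact .inl haC
  · exact .inr (Finset.mem_filter.2 ⟨Finset.mem_sdiff.2 ⟨has, haC⟩, v, hvC, hva.symm⟩)

theorem exists_isVStructureFreeOn (hG : IsChordal G) {K : Set V} (hK : G.IsClique K)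
    (πK : V → ℕ) (hπK : Set.InjOn πK K) (s : Finset V) (hKs : K ⊆ s) :
    ∃ ρ : V → ℕ, G.IsVStructureFreeOn s ρ ∧ Set.EqOn ρ πK K ∧
      ∀ u ∈ K, ∀ w ∈ s, w ∉ K → ρ u < ρ w := by
  classical
  induction s using Finset.strongInduction with
  | H s ih =>
  by_cases hsK : ↑s ⊆ K
  · exact ⟨πK, ⟨hπK.mono hsK, fun b _ => hK.subset fun a ha => hsK ha.1⟩,
      Set.eqOn_refl _ _, fun u _ w hw hwK => (hwK (hsK hw)).elim⟩
  obtain ⟨w, hw, hwK⟩ := Set.not_subset.1 hsK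
  obtain ⟨v, hvs, hvK, hv⟩ :=
    exists_isSimplicialIn_not_mem (hG.exists_isSimplicialIn_not_adj s) hK hw hwK
  have hKv : K ⊆ ↑(s.erase v) := fun u hu =>
    Finset.mem_erase.2 ⟨ne_of_mem_of_not_mem hu hvK, hKs hu⟩
  obtain ⟨ρ, hρ, heq, hfirst⟩ := ih _ (Finset.erase_ssubset hvs) hKv
  set M := (s.erase v).sup ρ + 1
  have hM (a : V) (ha : a ∈ s.erase v) : ρ a < M := Nat.lt_succ_of_le (Finset.le_sup ha)
  have hs : (s : Set V) = insert v ↑(s.erase v) := by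
    rw [← Finset.coe_insert, Finset.insert_erase hvs]
  refine ⟨Function.update ρ v M, hs ▸ hρ.update (hs ▸ hv) hM, fun u hu => ?_,
    fun u hu w hw hwK => ?_⟩
  · rw [Function.update_of_ne (ne_of_mem_of_not_mem hu hvK), heq hu]
  · rw [Function.update_of_ne (ne_of_mem_of_not_mem hu hvK)]
    by_cases hwv : w = v
    · rw [hwv, Function.update_self]
      exact hM u (hKv hu)
    · rw [Function.update_of_ne hwv]
      exact hfirst u hu w (Finset.mem_erase.2 ⟨hwv, hw⟩) hwK

end IsChordal

theorem stmt_4_general {V : Type*} [Fintype V] (C : SimpleGraph V) (hch : IsChordal C)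
    (K : Set V) (hK : C.IsClique K)
    (πK : V → ℕ) (hπK : Set.InjOn πK K) :
    ∃ ρ : V → ℕ, Function.Injective ρ ∧
      (∀ u ∈ K, ∀ v ∈ K, ρ u < ρ v ↔ πK u < πK v) ∧
      (∀ u ∈ K, ∀ v ∉ K, ρ u < ρ v) ∧
      (∀ b : V, C.IsClique {a : V | C.Adj a b ∧ ρ a < ρ b}) := by
  obtain ⟨ρ, ⟨hinj, hclique⟩, heq, hfirst⟩ :=
    hch.exists_isVStructureFreeOn hK πK hπK Finset.univ (by simp)
  refine ⟨ρ, Set.injOn_univ.1 (by simpa using hinj), fun u hu v hv => by rw [heq hu, heq hv],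
    fun u hu v hv => hfirst u hu v (Finset.mem_univ v) hv, fun b => ?_⟩
  simpa using hclique b (by simp)

/-- Let `C` be a chordal graph and `K` a maximal clique of `C`.
For any linear ordering of the vertices of `K` (given by an injective ranking `πK`),
there is a topological ordering `ρ` of all vertices of `C` beginning with `K` in the
order prescribed by `πK`, such that orienting each edge from its earlier to its later
endpoint creates no v-structure: the earlier neighbors of every vertex form a clique
(equivalently, the reverse of `ρ` is a perfect elimination ordering). -/
theorem stmt_4 {V : Type*} [Fintype V] (C : SimpleGraph V) (hch : IsChordal C)
    (K : Set V) (hK : C.IsClique K)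
    (hmax : ∀ K' : Set V, C.IsClique K' → K ⊆ K' → K' = K)
    (πK : V → ℕ) (hπK : Set.InjOn πK K) :
    ∃ ρ : V → ℕ, Function.Injective ρ ∧
      (∀ u ∈ K, ∀ v ∈ K, ρ u < ρ v ↔ πK u < πK v) ∧
      (∀ u ∈ K, ∀ v ∉ K, ρ u < ρ v) ∧
      (∀ b : V, C.IsClique {a : V | C.Adj a b ∧ ρ a < ρ b}) :=
  stmt_4_general C hch K hK πK hπK
end

section
/- If an undirected chordal graph D has a maximal clique K with K ≠ V(D), then there exists a vertex v ∉ K whose neighborhood in D is a clique (i.e., v is a simplicial vertex outside K). -/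
namespace SimpleGraph

variable {V : Type*} {G : SimpleGraph V}

namespace Walk

variable {u v : V}

theorem isChordless_of_forall_length_le {p : G.Walk u v}
    (hp : ∀ q : G.Walk u v, q.support ⊆ p.support → p.length ≤ q.length) :
    p.IsChordless := by
  rw [isChordless_iff_forall_mem_edges]
  suffices key : ∀ i j, i ≤ j → j ≤ p.length → G.Adj (p.getVert i) (p.getVert j) →
      s(p.getVert i, p.getVert j) ∈ p.edges by
    intro x y hx hy hxy
    obtain ⟨i, rfl, hi⟩ := mem_support_iff_exists_getVert.mp hx
    obtain ⟨j, rfl, hj⟩ := mem_support_iff_exists_getVert.mp hy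
    rcases le_total i j with hij | hji
    · exact key i j hij hj hxy
    · exact Sym2.eq_swap ▸ key j i hji hi hxy.symm
  intro i j hij hj hadj
  obtain rfl | rfl | hij : j = i ∨ j = i + 1 ∨ i + 2 ≤ j := by omega
  · exact absurd hadj (G.irrefl)
  · exact p.mk_mem_edges_iff_exists.mpr ⟨i, by omega, rfl⟩
  · -- shortcut `p` along the chord
    have hshort := hp ((p.take i).append (cons hadj (p.drop j))) (by
      intro w hw
      simp only [mem_support_append_iff, support_cons, List.mem_cons,
        support_take, drop_support_eq_support_drop_min] at hw
      rcases hw with hw | rfl | hw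
      · exact List.take_subset _ _ hw
      · exact getVert_mem_support _ _
      · exact List.drop_subset _ _ hw)
    simp only [length_append, take_length, length_cons, drop_length] at hshort
    omega

theorem exists_isPath_isChordless_support_subset (p : G.Walk u v) :
    ∃ q : G.Walk u v, q.IsPath ∧ q.IsChordless ∧ q.support ⊆ p.support := by
  classical
  have hex : ∃ n, ∃ q : G.Walk u v, q.support ⊆ p.support ∧ q.length = n :=
    ⟨_, p, List.Subset.refl _, rfl⟩
  obtain ⟨q, hqp, hq⟩ := Nat.find_spec hex
  have hmin : ∀ r : G.Walk u v, r.support ⊆ p.support → q.length ≤ r.length :=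
    fun r hr => hq ▸ Nat.find_min' hex ⟨r, hr, rfl⟩
  have hbypass : q.bypass.support ⊆ p.support :=
    List.Subset.trans q.support_bypass_subset_support hqp
  refine ⟨q.bypass, q.bypass_isPath, isChordless_of_forall_length_le fun r hr => ?_, hbypass⟩
  exact q.length_bypass_le_length.trans (hmin r (List.Subset.trans hr hbypass))

theorem IsChordless.append_of_forall_not_adj {p : G.Walk u v} {q : G.Walk v u}
    (hp : p.IsChordless) (hq : q.IsChordless) {A B : Set V}
    (hpA : ∀ w ∈ p.support, w = u ∨ w = v ∨ w ∈ A)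
    (hqB : ∀ w ∈ q.support, w = u ∨ w = v ∨ w ∈ B)
    (hAB : ∀ a ∈ A, ∀ b ∈ B, ¬ G.Adj a b) : (p.append q).IsChordless := by
  rw [isChordless_iff_forall_mem_edges] at hp hq ⊢
  have mixed : ∀ {x y}, x ∈ p.support → y ∈ q.support → G.Adj x y →
      s(x, y) ∈ p.edges ∨ s(x, y) ∈ q.edges := by
    intro x y hx hy hxy
    rcases hpA x hx with rfl | rfl | hxA
    · exact .inr (hq q.end_mem_support hy hxy)
    · exact .inr (hq q.start_mem_support hy hxy)
    rcases hqB y hy with rfl | rfl | hyB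
    · exact .inl (hp hx p.start_mem_support hxy)
    · exact .inl (hp hx p.end_mem_support hxy)
    · exact absurd hxy (hAB x hxA y hyB)
  intro x y hx hy hxy
  rw [edges_append, List.mem_append]
  rw [mem_support_append_iff] at hx hy
  rcases hx with hx | hx <;> rcases hy with hy | hy
  · exact .inl (hp hx hy hxy)
  · exact mixed hx hy hxy
  · exact Sym2.eq_swap ▸ mixed hy hx hxy.symm
  · exact .inr (hq hx hy hxy)

theorem two_le_length_of_not_adj (p : G.Walk u v) (huv : u ≠ v) (hadj : ¬ G.Adj u v) :
    2 ≤ p.length := by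
  by_contra! h
  interval_cases hp : p.length
  · exact huv (p.eq_of_length_eq_zero hp)
  · exact hadj (p.adj_of_length_eq_one hp)

end Walk

namespace ComponentCompl

variable {S : Set V}

theorem exists_walk_through (C : G.ComponentCompl S) {x y wx wy : V} (hwx : wx ∈ C)
    (hwy : wy ∈ C) (hx : G.Adj x wx) (hy : G.Adj wy y) :
    ∃ p : G.Walk x y, ∀ w ∈ p.support, w = x ∨ w = y ∨ w ∈ C := by
  classical
  obtain ⟨hwxS, rfl⟩ := hwx
  obtain ⟨hwyS, hC⟩ := hwy
  obtain ⟨q⟩ := ConnectedComponent.exact hC.symm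
  let r : G.Walk wx wy := q.map (Embedding.induce Sᶜ).toHom
  refine ⟨.cons hx (r.concat hy), fun w hw => ?_⟩
  rw [Walk.support_cons, Walk.support_concat, show r.support = _ from Walk.support_map _ q] at hw
  simp only [List.mem_cons, List.mem_append, List.mem_map, List.not_mem_nil, or_false] at hw
  rcases hw with rfl | ⟨w', hw', rfl⟩ | rfl
  · exact .inl rfl
  · exact .inr <| .inr ⟨w'.2, ConnectedComponent.sound (q.takeUntil w' hw').reachable.symm⟩
  · exact .inr <| .inl rfl

theorem exists_adj_of_mem_of_notMem (C : G.ComponentCompl S) {z c d : V}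
    (C' : G.ComponentCompl (S \ {z})) (hc : c ∈ C) (hd : d ∉ C) (hc' : c ∈ C')
    (hd' : d ∈ C') :
    ∃ w ∈ C, G.Adj w z := by
  obtain ⟨hcS, rfl⟩ := hc'
  obtain ⟨hdS, hC'⟩ := hd'
  obtain ⟨q⟩ := ConnectedComponent.exact hC'.symm
  obtain ⟨⟨⟨s, t⟩, hst⟩, -, hs, ht⟩ := q.exists_boundary_dart {w | w.val ∈ C} hc hd
  refine ⟨s, hs, ?_⟩
  by_cases htz : t.val = z
  · have hst : G.Adj s t := hst
    rwa [htz] at hst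
  · exact absurd (C.mem_of_adj s t hs (fun htS => t.2 ⟨htS, htz⟩) hst) ht

theorem isClique_neighborSet_of_induce (C : G.ComponentCompl S) {v : ↥((C : Set V) ∪ S)}
    (hv : v.val ∈ C)
    (h : (G.induce ((C : Set V) ∪ S)).IsClique ((G.induce ((C : Set V) ∪ S)).neighborSet v)) :
    G.IsClique (G.neighborSet v) := by
  have hmem : ∀ w, G.Adj v w → w ∈ (C : Set V) ∪ S := fun w hvw =>
    (em (w ∈ S)).elim .inr fun hwS => .inl (C.mem_of_adj _ w hv hwS hvw)
  intro x hx y hy hxy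
  exact h (x := ⟨x, hmem x hx⟩) (y := ⟨y, hmem y hy⟩) hx hy
    (fun e => hxy (congrArg Subtype.val e))

theorem disjoint_or_disjoint_of_isClique {C D : G.ComponentCompl S} (hCD : C ≠ D) {K : Set V}
    (hK : G.IsClique K) : Disjoint K C ∨ Disjoint K D := by
  by_contra! h
  obtain ⟨⟨c, hcK, hcC⟩, d, hdK, hdD⟩ :=
    And.imp Set.not_disjoint_iff.mp Set.not_disjoint_iff.mp h
  have hdisj : Disjoint (C : Set V) D := ComponentCompl.pairwise_disjoint hCD
  have hcd : c ≠ d := fun e => Set.disjoint_left.mp hdisj hcC (e ▸ hdD)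
  exact Set.disjoint_left.mp hdisj (C.mem_of_adj c d hcC (notMem_of_mem hdD) (hK hcK hdK hcd)) hdD

end ComponentCompl

def Separates (G : SimpleGraph V) (S : Set V) (a b : V) : Prop :=
  a ∉ S ∧ b ∉ S ∧ ∀ C : G.ComponentCompl S, a ∈ C → b ∉ C

theorem separates_neighborSet {a b : V} (hab : a ≠ b) (hnadj : ¬ G.Adj a b) :
    G.Separates (G.neighborSet a) a b := by
  refine ⟨G.irrefl, hnadj, ?_⟩
  rintro C ⟨ha, rfl⟩ ⟨hb, hC⟩
  obtain ⟨q⟩ := ConnectedComponent.exact hC.symm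
  by_cases hq : q.Nil
  · exact hab (congrArg Subtype.val hq.eq)
  · exact q.snd.2 (q.adj_snd hq)

end SimpleGraph

open SimpleGraph

namespace IsChordal

variable {V : Type*} {G : SimpleGraph V}

theorem induce (hG : IsChordal G) (T : Set V) : IsChordal (G.induce T) := fun n hn f hf hadj =>
  hG n hn (Subtype.val ∘ f) (Subtype.val_injective.comp hf) hadj

theorem not_isChordless (hG : IsChordal G) {u : V} {c : G.Walk u u} (hc : c.IsCycle)
    (h4 : 4 ≤ c.length) : ¬ c.IsChordless := by
  intro hcl
  set n := c.length
  have : NeZero n := ⟨by omega⟩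
  set f : ZMod n → V := fun k => c.getVert k.val
  have hf : ∀ i ≤ n, f i = c.getVert i := by
    intro i hi
    rcases hi.lt_or_eq with hi | rfl
    · simp [f, ZMod.val_cast_of_lt hi]
    · simp [f, n, c.getVert_length]
  have hinj : Function.Injective f := fun k l hkl => ZMod.val_injective n <|
    hc.getVert_injOn' (Nat.le_sub_one_of_lt k.val_lt) (Nat.le_sub_one_of_lt l.val_lt) hkl
  have hadj : ∀ k, G.Adj (f k) (f (k + 1)) := by
    intro k
    have hk : k + 1 = ((k.val + 1 : ℕ) : ZMod n) := by simp
    rw [hk, hf _ k.val_lt]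
    exact c.adj_getVert_succ k.val_lt
  obtain ⟨k, l, -, hkl, hlk, hchord⟩ := hG n h4 f hinj hadj
  obtain ⟨i, hi, he⟩ := c.mk_mem_edges_iff_exists.mp <|
    hcl.mem_edges (c.getVert_mem_support _) (c.getVert_mem_support _) hchord
  rw [← hf i hi.le, ← hf (i + 1) hi, Sym2.eq_iff] at he
  rcases he with ⟨hik, hil⟩ | ⟨hil, hik⟩
  · exact hkl (by rw [← hinj hik, ← hinj hil]; push_cast; rfl)
  · exact hlk (by rw [← hinj hik, ← hinj hil]; push_cast; rfl)

theorem adj_of_walks_through_disjoint (hG : IsChordal G) {x y : V} (hxy : x ≠ y) {A B : Set V}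
    (hAB : Disjoint A B) (hnadj : ∀ a ∈ A, ∀ b ∈ B, ¬ G.Adj a b)
    (pA : G.Walk x y) (hpA : ∀ w ∈ pA.support, w = x ∨ w = y ∨ w ∈ A)
    (pB : G.Walk x y) (hpB : ∀ w ∈ pB.support, w = x ∨ w = y ∨ w ∈ B) : G.Adj x y := by
  by_contra hxy'
  obtain ⟨P, hP, hPc, hPs⟩ := pA.exists_isPath_isChordless_support_subset
  obtain ⟨Q, hQ, hQc, hQs⟩ := pB.reverse.exists_isPath_isChordless_support_subset
  have hPA : ∀ w ∈ P.support, w = x ∨ w = y ∨ w ∈ A := fun w hw => hpA w (hPs hw)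
  have hQB : ∀ w ∈ Q.support, w = x ∨ w = y ∨ w ∈ B := fun w hw =>
    hpB w (by simpa using hQs hw)
  have hx : x ∉ P.support.tail :=
    (List.nodup_cons.mp (P.cons_tail_support ▸ hP.support_nodup)).1
  have hy : y ∉ Q.support.tail :=
    (List.nodup_cons.mp (Q.cons_tail_support ▸ hQ.support_nodup)).1
  have hcycle : (P.append Q).IsCycle := by
    refine hP.isCycle_append hQ (fun w hwP hwQ => ?_) (.inl (P.two_le_length_of_not_adj hxy hxy'))
    have hwA := ((hPA w (List.mem_of_mem_tail hwP)).resolve_left (by rintro rfl; exact hx hwP))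
      |>.resolve_left (by rintro rfl; exact hy hwQ)
    have hwB := ((hQB w (List.mem_of_mem_tail hwQ)).resolve_left (by rintro rfl; exact hx hwP))
      |>.resolve_left (by rintro rfl; exact hy hwQ)
    exact Set.disjoint_left.mp hAB hwA hwB
  refine hG.not_isChordless hcycle ?_ (hPc.append_of_forall_not_adj hQc hPA hQB hnadj)
  have := P.two_le_length_of_not_adj hxy hxy'
  have := Q.two_le_length_of_not_adj hxy.symm (fun h => hxy' h.symm)
  rw [Walk.length_append]
  omega

theorem isClique_of_minimal_separates (hG : IsChordal G) {S : Set V} {a b : V}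
    (hS : Minimal (G.Separates · a b) S) : G.IsClique S := by
  obtain ⟨ha, hb, hsep⟩ := hS.prop
  set A := G.componentComplMk ha
  set B := G.componentComplMk hb
  have hbA : b ∉ A := hsep A (G.componentComplMk_mem ha)
  have hAB : A ≠ B := fun h => hbA (h ▸ G.componentComplMk_mem hb)
  have haB : a ∉ B := fun ⟨_, h⟩ => hAB h
  have hdisj : Disjoint (A : Set V) B := ComponentCompl.pairwise_disjoint hAB
  have hnadj : ∀ u ∈ A, ∀ v ∈ B, ¬ G.Adj u v := fun u hu v hv huv =>
    Set.disjoint_left.mp hdisj (A.mem_of_adj u v hu (ComponentCompl.notMem_of_mem hv) huv) hv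
  have hfull : ∀ z ∈ S, (∃ w ∈ A, G.Adj w z) ∧ ∃ w ∈ B, G.Adj w z := by
    intro z hz
    -- by minimality, `S \ {z}` does not separate `a` from `b`
    obtain ⟨C', haC', hbC'⟩ : ∃ C' : G.ComponentCompl (S \ {z}), a ∈ C' ∧ b ∈ C' := by
      by_contra! h
      exact (hS.2 ⟨fun h => ha h.1, fun h => hb h.1, h⟩ Set.sdiff_subset hz).2 rfl
    exact ⟨A.exists_adj_of_mem_of_notMem C' (G.componentComplMk_mem ha) hbA haC' hbC',
      B.exists_adj_of_mem_of_notMem C' (G.componentComplMk_mem hb) haB hbC' haC'⟩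
  intro x hx y hy hxy
  obtain ⟨⟨_, haxA, hax⟩, _, hbxB, hbx⟩ := hfull x hx
  obtain ⟨⟨_, hayA, hay⟩, _, hbyB, hby⟩ := hfull y hy
  obtain ⟨pA, hpA⟩ := A.exists_walk_through haxA hayA hax.symm hay
  obtain ⟨pB, hpB⟩ := B.exists_walk_through hbxB hbyB hbx.symm hby
  exact hG.adj_of_walks_through_disjoint hxy hdisj hnadj pA hpA pB hpB

theorem exists_notMem_isClique_neighborSet [Finite V] (hG : IsChordal G) {K : Set V}
    (hK : G.IsClique K) (hne : K ≠ Set.univ) :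
    ∃ v ∉ K, G.IsClique (G.neighborSet v) := by
  induction hn : Nat.card V using Nat.strong_induction_on generalizing V with
  | _ n ih =>
    by_cases hcomplete : ∀ a b : V, a ≠ b → G.Adj a b
    · obtain ⟨v, hv⟩ := (Set.ne_univ_iff_exists_notMem K).mp hne
      exact ⟨v, hv, fun x _ y _ hxy => hcomplete x y hxy⟩
    push Not at hcomplete
    obtain ⟨a, b, hab, hnadj⟩ := hcomplete
    obtain ⟨S, hS⟩ := exists_minimal_of_wellFoundedLT (G.Separates · a b)
      ⟨_, separates_neighborSet hab hnadj⟩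
    obtain ⟨ha, hb, hsep⟩ := hS.prop
    have side : ∀ (C : G.ComponentCompl S) (d : V), d ∉ (C : Set V) ∪ S → Disjoint K C →
        ∃ v ∉ K, G.IsClique (G.neighborSet v) := by
      intro C d hd hKC
      obtain ⟨c, hcS, rfl⟩ := C.exists_eq_mk
      have hcard : Nat.card ↥((G.componentComplMk hcS : Set V) ∪ S) < n := by
        rw [← hn, Nat.card_coe_set_eq, ← Set.ncard_univ]
        exact Set.ncard_lt_ncard (Set.ssubset_univ_iff.mpr fun h => hd (h ▸ Set.mem_univ d))
      obtain ⟨v, hvS, hv⟩ := ih _ hcard (hG.induce _) (K := {v | v.val ∈ S})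
        (fun _ hx _ hy hxy =>
          hG.isClique_of_minimal_separates hS hx hy (Subtype.val_injective.ne hxy))
        (fun h => hcS (Set.eq_univ_iff_forall.mp h ⟨c, .inl (G.componentComplMk_mem hcS)⟩)) rfl
      have hvC : v.val ∈ G.componentComplMk hcS := v.2.resolve_right hvS
      exact ⟨v, Set.disjoint_right.mp hKC hvC,
        ComponentCompl.isClique_neighborSet_of_induce _ hvC hv⟩
    have hAB : G.componentComplMk ha ≠ G.componentComplMk hb :=
      fun h => hsep _ (G.componentComplMk_mem ha) (h ▸ G.componentComplMk_mem hb)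
    rcases ComponentCompl.disjoint_or_disjoint_of_isClique hAB hK with hKA | hKB
    · exact side _ b (fun h => h.elim (fun ⟨_, e⟩ => hAB e.symm) hb) hKA
    · exact side _ a (fun h => h.elim (fun ⟨_, e⟩ => hAB e) ha) hKB

end IsChordal

theorem stmt_5_general {V : Type*} [Fintype V] (D : SimpleGraph V) (hch : IsChordal D)
    (K : Set V) (hK : D.IsClique K)
    (hne : K ≠ Set.univ) :
    ∃ v : V, v ∉ K ∧ D.IsClique (D.neighborSet v) :=
  hch.exists_notMem_isClique_neighborSet hK hne

/-- If an undirected chordal graph `D` has a maximal clique `K` that is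
not all of `V(D)`, then there is a simplicial vertex outside `K`: a vertex `v ∉ K` whose
neighborhood in `D` is a clique. -/
theorem stmt_5 {V : Type*} [Fintype V] (D : SimpleGraph V) (hch : IsChordal D)
    (K : Set V) (hK : D.IsClique K)
    (hmax : ∀ K' : Set V, D.IsClique K' → K ⊆ K' → K' = K)
    (hne : K ≠ Set.univ) :
    ∃ v : V, v ∉ K ∧ D.IsClique (D.neighborSet v) :=
  stmt_5_general D hch K hK hne
end

section
/- Let C be an undirected connected graph, K a maximal clique of C, and T the vertex set of any connected component of C ∖ K. Then there exists a vertex i ∈ K that has no neighbor in T, provided C is chordal. -/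
/-!
Suppose every vertex of `K` has a neighbour in `T`, and pick `t ∈ T` with the most neighbours
in `K`. By maximality of `K` some `a ∈ K` misses `t`. A shortest walk from `t` to `a` through `T`
is an induced path whose vertices before `a` lie in `T`. In a chordal graph a vertex outside an
induced path that is adjacent to both of its ends is adjacent to all of it (split the path at an
interior neighbour, which exists since otherwise the path closes up to a chordless cycle). Hence
every `K`-neighbour of `t` is adjacent to the last vertex `u` of the path before `a`, and so is
`a` itself: `u ∈ T` has strictly more neighbours in `K` than `t`.
-/

namespace SimpleGraph

variable {V : Type*} {G : SimpleGraph V}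

/-- `p 0, …, p m` is an induced path of `G`; the values of `p` beyond `m` play no role. -/
structure IsInducedPath (G : SimpleGraph V) (p : ℕ → V) (m : ℕ) : Prop where
  adj_succ : ∀ i < m, G.Adj (p i) (p (i + 1))
  not_adj : ∀ i j, i + 2 ≤ j → j ≤ m → ¬G.Adj (p i) (p j)
  injOn : Set.InjOn p (Set.Iic m)

namespace IsInducedPath

variable {p : ℕ → V} {m : ℕ}

theorem of_le (hp : G.IsInducedPath p m) {k : ℕ} (hk : k ≤ m) : G.IsInducedPath p k where
  adj_succ i hi := hp.adj_succ i (by omega)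
  not_adj i j hij hj := hp.not_adj i j hij (by omega)
  injOn := hp.injOn.mono (Set.Iic_subset_Iic.mpr hk)

theorem shift (hp : G.IsInducedPath p m) {k : ℕ} (hk : k ≤ m) :
    G.IsInducedPath (fun i => p (k + i)) (m - k) where
  adj_succ i hi := hp.adj_succ (k + i) (by omega)
  not_adj i j hij hj := hp.not_adj (k + i) (k + j) (by omega) (by omega)
  injOn i hi j hj h := by
    simp only [Set.mem_Iic] at hi hj
    exact Nat.add_left_cancel (hp.injOn (Set.mem_Iic.mpr (by omega)) (Set.mem_Iic.mpr (by omega)) h)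

theorem of_spanningCoe_induce {S : Set V}
    (hp : ((⊤ : G.Subgraph).induce S).spanningCoe.IsInducedPath p m) :
    G.IsInducedPath p m where
  adj_succ i hi := (hp.adj_succ i hi).2.2
  not_adj i j hij hj hadj := by
    have hpi : p i ∈ S := (hp.adj_succ i (by omega)).1
    have hpj : p j ∈ S := by
      simpa [Nat.sub_add_cancel (show 1 ≤ j by omega)] using (hp.adj_succ (j - 1) (by omega)).2.1
    exact hp.not_adj i j hij hj ⟨hpi, hpj, hadj⟩
  injOn := hp.injOn

end IsInducedPath

theorem Walk.dist_getVert_of_length_eq_dist {u v : V} (p : G.Walk u v)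
    (hp : p.length = G.dist u v) {i : ℕ} (hi : i ≤ p.length) : G.dist u (p.getVert i) = i := by
  rw [← length_eq_dist_of_subwalk hp (p.isSubwalk_take i), Walk.take_length]
  omega

theorem Walk.isInducedPath_getVert_of_length_eq_dist {u v : V} (p : G.Walk u v)
    (hp : p.length = G.dist u v) : G.IsInducedPath p.getVert p.length where
  adj_succ i hi := p.adj_getVert_succ hi
  not_adj i j hij hj hadj := by
    have := hadj.diff_dist_adj (u := u)
    rw [p.dist_getVert_of_length_eq_dist hp hj, p.dist_getVert_of_length_eq_dist hp (by omega)]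
      at this
    omega
  injOn i hi j hj h := by
    rw [← p.dist_getVert_of_length_eq_dist hp hi, ← p.dist_getVert_of_length_eq_dist hp hj, h]

theorem IsClique.exists_not_adj_of_maximal {K : Set V} (hK : G.IsClique K)
    (hmax : ∀ K' : Set V, G.IsClique K' → K ⊆ K' → K' = K) {v : V} (hv : v ∉ K) :
    ∃ a ∈ K, ¬G.Adj a v := by
  by_contra! h
  have := hmax _ (hK.insert fun b hb _ => (h b hb).symm) (Set.subset_insert v K)
  exact hv (this ▸ Set.mem_insert v K)

end SimpleGraph

namespace IsChordal

variable {V : Type*} {G : SimpleGraph V}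

theorem exists_chord_of_cycle (hG : IsChordal G) {n : ℕ} (hn : 4 ≤ n) {g : ℕ → V}
    (hinj : Set.InjOn g (Set.Iio n)) (hadj : ∀ i, i + 1 < n → G.Adj (g i) (g (i + 1)))
    (hclose : G.Adj (g (n - 1)) (g 0)) :
    ∃ i j, i + 1 < j ∧ j < n ∧ ¬(i = 0 ∧ j = n - 1) ∧ G.Adj (g i) (g j) := by
  have : NeZero n := ⟨by omega⟩
  have : Fact (1 < n) := ⟨by omega⟩
  have hval_succ (z : ZMod n) : (z + 1).val = (z.val + 1) % n := by
    rw [ZMod.val_add, ZMod.val_one]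
  have hf_inj : Function.Injective fun z : ZMod n => g z.val := fun z w h =>
    ZMod.val_injective n (hinj (ZMod.val_lt z) (ZMod.val_lt w) h)
  have hf_adj (z : ZMod n) : G.Adj (g z.val) (g (z + 1).val) := by
    rw [hval_succ]
    rcases Nat.lt_or_ge (z.val + 1) n with h | h
    · rw [Nat.mod_eq_of_lt h]
      exact hadj _ h
    · have hz : z.val = n - 1 := by have := ZMod.val_lt z; omega
      rw [hz, Nat.sub_add_cancel (by omega), Nat.mod_self]
      exact hclose
  obtain ⟨k, l, hkl, hk1, hl1, hchord⟩ := hG n hn _ hf_inj hf_adj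
  have hsucc_ne {k l : ZMod n} (h : k + 1 ≠ l) : k.val + 1 ≠ l.val := fun h' =>
    h (ZMod.val_injective n (by rw [hval_succ, ← h', Nat.mod_eq_of_lt (by
      have := ZMod.val_lt l; omega)]))
  have hwrap {k l : ZMod n} (h : l + 1 ≠ k) : ¬(k.val = 0 ∧ l.val = n - 1) :=
    fun ⟨hk, hl⟩ => h (ZMod.val_injective n (by
      rw [hval_succ, hl, Nat.sub_add_cancel (by omega), Nat.mod_self, hk]))
  rcases Nat.lt_trichotomy k.val l.val with h | h | h
  · exact ⟨k.val, l.val, by have := hsucc_ne hk1; omega, ZMod.val_lt l, hwrap hl1, hchord⟩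
  · exact absurd (ZMod.val_injective n h) hkl
  · exact ⟨l.val, k.val, by have := hsucc_ne hl1; omega, ZMod.val_lt k, hwrap hk1, hchord.symm⟩

theorem exists_adj_of_isInducedPath (hG : IsChordal G) {p : ℕ → V} {m : ℕ}
    (hp : G.IsInducedPath p m) (hm : 2 ≤ m) {w : V} (hw : ∀ i ≤ m, p i ≠ w)
    (h0 : G.Adj w (p 0)) (hlast : G.Adj w (p m)) : ∃ i, 0 < i ∧ i < m ∧ G.Adj w (p i) := by
  by_contra! hinterior
  let g : ℕ → V := fun i => if i ≤ m then p i else w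
  have hg_inj : Set.InjOn g (Set.Iio (m + 2)) := by
    intro i hi j hj h
    simp only [Set.mem_Iio] at hi hj
    by_cases hi' : i ≤ m <;> by_cases hj' : j ≤ m <;>
      simp only [g, hi', hj', if_true, if_false] at h
    · exact hp.injOn hi' hj' h
    · exact absurd h (hw i hi')
    · exact absurd h.symm (hw j hj')
    · omega
  have hg_adj (i : ℕ) (hi : i + 1 < m + 2) : G.Adj (g i) (g (i + 1)) := by
    rcases Nat.lt_or_ge i m with h | h
    · simpa [g, h.le, Nat.succ_le_of_lt h] using hp.adj_succ i h
    · obtain rfl | rfl : i = m ∨ i = m + 1 := by omega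
      · simpa [g] using hlast.symm
      · omega
  obtain ⟨i, j, hij, hj, hwrap, hchord⟩ :=
    hG.exists_chord_of_cycle (n := m + 2) (by omega) hg_inj hg_adj (by simpa [g] using h0)
  rcases Nat.lt_or_ge m j with h | h
  · obtain rfl : j = m + 1 := by omega
    simp only [g, show i ≤ m by omega, show ¬m + 1 ≤ m by omega, if_true, if_false] at hchord
    exact hinterior i (by omega) (by omega) hchord.symm
  · simp only [g, h, show i ≤ m by omega, if_true] at hchord
    exact hp.not_adj i j hij h hchord

theorem adj_of_isInducedPath (hG : IsChordal G) {w : V} :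
    ∀ {m : ℕ} {p : ℕ → V}, G.IsInducedPath p m → (∀ i ≤ m, p i ≠ w) →
      G.Adj w (p 0) → G.Adj w (p m) → ∀ i ≤ m, G.Adj w (p i) := by
  intro m
  induction m using Nat.strong_induction_on with
  | _ m ih =>
    intro p hp hw h0 hlast i hi
    by_cases hm : m < 2
    · obtain rfl | rfl : i = 0 ∨ i = m := by omega
      exacts [h0, hlast]
    obtain ⟨j, hj0, hjm, hj⟩ := hG.exists_adj_of_isInducedPath hp (by omega) hw h0 hlast
    rcases Nat.le_total i j with hij | hji
    · exact ih j hjm (hp.of_le hjm.le) (fun k hk => hw k (by omega)) h0 hj i hij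
    · have := ih (m - j) (by omega) (hp.shift hjm.le) (fun k hk => hw (j + k) (by omega))
        (by simpa using hj) (by simpa [Nat.add_sub_cancel' hjm.le] using hlast) (i - j) (by omega)
      simpa [Nat.add_sub_cancel' hji] using this

theorem exists_adj_forall_adj_of_reachable (hG : IsChordal G) {S : Set V} {a t : V} (ha : a ∉ S)
    (ht : t ∈ S) (hat : ¬G.Adj a t)
    (hreach : ((⊤ : G.Subgraph).induce (insert a S)).spanningCoe.Reachable t a) :
    ∃ u ∈ S, G.Adj a u ∧ ∀ w ∉ insert a S, G.Adj w a → G.Adj w t → G.Adj w u := by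
  set H := ((⊤ : G.Subgraph).induce (insert a S)).spanningCoe
  obtain ⟨p, hp⟩ := hreach.exists_walk_length_eq_dist
  have hpath : G.IsInducedPath p.getVert p.length :=
    (p.isInducedPath_getVert_of_length_eq_dist hp).of_spanningCoe_induce
  have hlen : 1 < p.length := hp ▸ hreach.one_lt_dist_of_ne_of_not_adj
    (by rintro rfl; exact ha ht) (fun h => hat h.2.2.symm)
  have hmem (i : ℕ) (hi : i ≤ p.length) : p.getVert i ∈ insert a S := by
    rcases hi.lt_or_eq with hi | rfl
    · exact (p.adj_getVert_succ hi).1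
    · simp
  have hlast : H.Adj (p.getVert (p.length - 1)) a := by
    simpa [Nat.sub_add_cancel (show 1 ≤ p.length by omega)] using
      p.adj_getVert_succ (i := p.length - 1) (by omega)
  refine ⟨p.getVert (p.length - 1), ?_, hlast.2.2.symm, fun w hw hwa hwt => ?_⟩
  · refine (hmem _ (by omega)).resolve_left fun h => ?_
    have := hpath.injOn (show p.length - 1 ∈ Set.Iic p.length by simp)
      (show p.length ∈ Set.Iic p.length by simp) (by simpa using h)
    omega
  · exact hG.adj_of_isInducedPath hpath (fun i hi h => hw (h ▸ hmem i hi :))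
      (by simpa using hwt) (by simpa using hwa) _ (by omega)

end IsChordal

theorem stmt_6_general {V : Type*} [Fintype V] (C : SimpleGraph V)
    (hch : IsChordal C)
    (K : Set V) (hK : C.IsClique K)
    (hmax : ∀ K' : Set V, C.IsClique K' → K ⊆ K' → K' = K)
    (T : Set V) (hTK : ∀ t ∈ T, t ∉ K) (hTne : T.Nonempty)
    (hTconn : ∀ t ∈ T, ∀ t' ∈ T,
      Relation.ReflTransGen (fun a b => C.Adj a b ∧ a ∈ T ∧ b ∈ T) t t') :
    ∃ i ∈ K, ∀ t ∈ T, ¬ C.Adj i t := by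
  by_contra! hcover
  obtain ⟨t, ht, htmax⟩ :=
    T.exists_max_image (fun v => (K ∩ C.neighborSet v).ncard) T.toFinite hTne
  obtain ⟨a, ha, hat⟩ := hK.exists_not_adj_of_maximal hmax (hTK t ht)
  obtain ⟨t', ht', hat'⟩ := hcover a ha
  set H := ((⊤ : C.Subgraph).induce (insert a T)).spanningCoe
  have hreach : H.Reachable t a := by
    have htt' : Relation.ReflTransGen H.Adj t t' := (hTconn t ht t' ht').lift id
      fun x y ⟨hxy, hx, hy⟩ => ⟨Or.inr hx, Or.inr hy, hxy⟩
    have ht'a : H.Adj t' a := ⟨Or.inr ht', Or.inl rfl, hat'.symm⟩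
    exact ((SimpleGraph.reachable_iff_reflTransGen t t').mpr htt').trans ht'a.reachable
  obtain ⟨u, hu, hau, hsub⟩ :=
    hch.exists_adj_forall_adj_of_reachable (fun h => hTK a h ha) ht hat hreach
  have hle : K ∩ C.neighborSet t ⊆ K ∩ C.neighborSet u := by
    rintro b ⟨hb, hbt⟩
    have hba : b ≠ a := by rintro rfl; exact hat hbt.symm
    exact ⟨hb, (hsub b (by rintro (rfl | h); exacts [hba rfl, hTK b h hb])
      (hK hb ha hba) hbt.symm).symm⟩
  have hlt : K ∩ C.neighborSet t ⊂ K ∩ C.neighborSet u :=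
    (Set.ssubset_iff_of_subset hle).mpr ⟨a, ⟨ha, hau.symm⟩, fun h => hat h.2.symm⟩
  exact (Set.ncard_lt_ncard hlt (Set.toFinite _)).not_ge (htmax u hu)

/-- Let `C` be a connected chordal graph, `K` a maximal clique of `C`,
and `T` the vertex set of a connected component of `C ∖ K` (expressed by: `T` is disjoint
from `K`, nonempty, connected via edges inside `T`, and closed under adjacency outside
`K`). Then some vertex `i ∈ K` has no neighbor in `T`. -/
theorem stmt_6 {V : Type*} [Fintype V] (C : SimpleGraph V) (hconn : C.Connected)
    (hch : IsChordal C)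
    (K : Set V) (hK : C.IsClique K)
    (hmax : ∀ K' : Set V, C.IsClique K' → K ⊆ K' → K' = K)
    (T : Set V) (hTK : ∀ t ∈ T, t ∉ K) (hTne : T.Nonempty)
    (hTconn : ∀ t ∈ T, ∀ t' ∈ T,
      Relation.ReflTransGen (fun a b => C.Adj a b ∧ a ∈ T ∧ b ∈ T) t t')
    (hTclosed : ∀ t ∈ T, ∀ u : V, C.Adj t u → u ∉ K → u ∈ T) :
    ∃ i ∈ K, ∀ t ∈ T, ¬ C.Adj i t :=
  stmt_6_general C hch K hK hmax T hTK hTne hTconn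
end

section
/- For an undirected graph C with vertex set V, fix i ∈ V and define ĝ_{i,j}(A) = m_{i,j}(V ∖ A) / m_{i,j}(V) when i and j are connected or equal in C, and 0 otherwise, where m_{i,j}(W) counts simple paths between i and j in the subgraph induced by W (with m_{i,i}(W)=1 if i∈W, and 0 if i∉W or j∉W). Then A ↦ ĝ_{i,j}(A) is monotone decreasing and supermodular as a set function on subsets of V. -/
open scoped Classical

/-- `l` is (the vertex list of) a simple path from `i` to `j` in the subgraph of `C`
induced on `W`: no repeated vertices, first vertex `i`, last vertex `j`, all vertices in
`W`, consecutive vertices adjacent.  (For `i = j` the single list `[i]` qualifies.) -/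
def IsSimplePath {V : Type*} (C : SimpleGraph V) (W : Set V) (i j : V)
    (l : List V) : Prop :=
  l.Nodup ∧ l.head? = some i ∧ l.getLast? = some j ∧ (∀ v ∈ l, v ∈ W) ∧
    l.Chain' C.Adj

/-- `m C W i j`: the number of simple paths between `i` and `j` in the subgraph of `C`
induced on `W` (equals `1` if `i = j ∈ W`, and `0` if `i ∉ W` or `j ∉ W`). -/
noncomputable def numPaths {V : Type*} (C : SimpleGraph V) (W : Set V) (i j : V) : ℕ :=
  Set.ncard {l : List V | IsSimplePath C W i j l}

/-- `ghat C i j A = m_{i,j}(V ∖ A) / m_{i,j}(V)` when `i` and `j` are connected or equal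
in `C`, and `0` otherwise. -/
noncomputable def ghat {V : Type*} (C : SimpleGraph V) (i j : V) (A : Set V) : ℝ :=
  if C.Reachable i j then
    (numPaths C (Set.univ \ A) i j : ℝ) / (numPaths C Set.univ i j : ℝ)
  else 0

/-! `ĝ(A)` is `m(V ∖ A)` times a nonnegative constant, and
`m(W) - m(W ∖ {x})` counts the simple paths in `W` through `x`; that set shrinks with `W`,
so `A ↦ m(V ∖ A)` is decreasing and supermodular. -/

lemma IsSimplePath.mono {V : Type*} {C : SimpleGraph V} {W W' : Set V} {i j : V} {l : List V}
    (h : IsSimplePath C W i j l) (hW : W ⊆ W') : IsSimplePath C W' i j l :=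
  ⟨h.1, h.2.1, h.2.2.1, fun v hv => hW (h.2.2.2.1 v hv), h.2.2.2.2⟩

section

variable {V : Type*} (C : SimpleGraph V) (i j : V) [Fintype V]

lemma finite_setOf_isSimplePath (W : Set V) : {l : List V | IsSimplePath C W i j l}.Finite :=
  (List.finite_length_le V (Fintype.card V)).subset fun _ hl => hl.1.length_le_card

lemma numPaths_mono {W W' : Set V} (hW : W ⊆ W') : numPaths C W i j ≤ numPaths C W' i j :=
  Set.ncard_le_ncard (fun _ hl => IsSimplePath.mono hl hW) (finite_setOf_isSimplePath C i j W')

lemma numPaths_eq_ncard_mem_add_numPaths_diff_singleton (W : Set V) (x : V) :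
    numPaths C W i j
      = {l : List V | IsSimplePath C W i j l ∧ x ∈ l}.ncard + numPaths C (W \ {x}) i j := by
  have hdiff : {l : List V | IsSimplePath C W i j l} \ {l | IsSimplePath C (W \ {x}) i j l}
      = {l | IsSimplePath C W i j l ∧ x ∈ l} := by
    ext l
    refine ⟨fun ⟨hl, hnl⟩ => ⟨hl, ?_⟩, fun ⟨hl, hx⟩ => ⟨hl, fun hnl => (hnl.2.2.2.1 x hx).2 rfl⟩⟩
    by_contra hx
    exact hnl ⟨hl.1, hl.2.1, hl.2.2.1,
      fun v hv => ⟨hl.2.2.2.1 v hv, fun hvx => hx (hvx ▸ hv)⟩, hl.2.2.2.2⟩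
  rw [numPaths, numPaths, ← hdiff]
  exact (Set.ncard_sdiff_add_ncard_of_subset (fun _ hl => IsSimplePath.mono hl Set.sdiff_subset)
    (finite_setOf_isSimplePath C i j W)).symm

lemma numPaths_add_numPaths_diff_singleton_le {W W' : Set V} (hW : W' ⊆ W) (x : V) :
    numPaths C W' i j + numPaths C (W \ {x}) i j
      ≤ numPaths C W i j + numPaths C (W' \ {x}) i j := by
  have hthrough : {l : List V | IsSimplePath C W' i j l ∧ x ∈ l}.ncard
      ≤ {l : List V | IsSimplePath C W i j l ∧ x ∈ l}.ncard :=
    Set.ncard_le_ncard (fun _ ⟨hl, hx⟩ => ⟨hl.mono hW, hx⟩)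
      ((finite_setOf_isSimplePath C i j W).subset fun _ hl => hl.1)
  rw [numPaths_eq_ncard_mem_add_numPaths_diff_singleton C i j W x,
    numPaths_eq_ncard_mem_add_numPaths_diff_singleton C i j W' x]
  omega

end

lemma exists_ghat_eq_mul_numPaths {V : Type*} (C : SimpleGraph V) (i j : V) :
    ∃ c : ℝ, 0 ≤ c ∧ ∀ A : Set V, ghat C i j A = c * numPaths C (Set.univ \ A) i j := by
  refine ⟨if C.Reachable i j then (numPaths C Set.univ i j : ℝ)⁻¹ else 0, by positivity,
    fun A => ?_⟩
  unfold ghat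
  split_ifs <;> simp [div_eq_inv_mul]

/-- For any graph `C` and vertices `i, j`, the set function
`A ↦ ĝ_{i,j}(A)` is monotone decreasing and supermodular. -/
theorem stmt_8 {V : Type*} [Fintype V] (C : SimpleGraph V) (i j : V) :
    (∀ A B : Set V, A ⊆ B → ghat C i j B ≤ ghat C i j A) ∧
    (∀ A B : Set V, A ⊆ B → ∀ x : V, x ∉ B →
      ghat C i j (A ∪ {x}) - ghat C i j A ≤ ghat C i j (B ∪ {x}) - ghat C i j B) := by
  obtain ⟨c, hc, hg⟩ := exists_ghat_eq_mul_numPaths C i j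
  refine ⟨fun A B hAB => ?_, fun A B hAB x _ => ?_⟩
  · rw [hg, hg]
    gcongr
    exact numPaths_mono C i j (Set.sdiff_subset_sdiff_right hAB)
  · have key : ((numPaths C (Set.univ \ B) i j + numPaths C ((Set.univ \ A) \ {x}) i j : ℕ) : ℝ)
        ≤ (numPaths C (Set.univ \ A) i j + numPaths C ((Set.univ \ B) \ {x}) i j : ℕ) :=
      Nat.cast_le.mpr <|
        numPaths_add_numPaths_diff_singleton_le C i j (Set.sdiff_subset_sdiff_right hAB) x
    push_cast at key
    simp only [hg, ← Set.sdiff_sdiff]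
    nlinarith [mul_le_mul_of_nonneg_left key hc]
end

section
/- In a DAG G with topological order 1, 2, …, p, define interventions iteratively: given shift intervention I_{k} on targets i₁ < … < i_k, if there exists a node whose mean under P^{I_k} differs from the target mean q, let i_{k+1} be the smallest such node; then i_{k+1} > i_k, and the process terminates after at most p steps with a shift intervention matching all coordinate means exactly. -/
/-!
Since parents precede children, unfolding the structural equations by strong induction along
the order shows that `X_i = sol a i` depends only on the shifts `a j` with `j ≤ i`. Hence
changing the shift at `i` by `c` leaves every `X_j`, `j < i`, unchanged pointwise, and moves
`X_i` by exactly `c`, because its parents are unchanged. Choosing `c = q i - E X_i` fixes the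
mean at `i` without disturbing the earlier ones, and sweeping `i = 0, …, p - 1` matches all means.
-/

open MeasureTheory

section ShiftIntervention

variable {ι Ω : Type*} [PartialOrder ι] [WellFoundedLT ι] {par : ι → ι → Prop}
  {F : ι → (ι → ℝ) → Ω → ℝ} {sol : (ι → ℝ) → ι → Ω → ℝ} (hpar : ∀ j i, par j i → j < i)
  (hdep : ∀ i (x y : ι → ℝ) ω, (∀ j, par j i → x j = y j) → F i x ω = F i y ω)
  (hsol : ∀ a i ω, sol a i ω = F i (fun j => sol a j ω) ω + a i)

include hpar hdep hsol in
theorem sol_apply_eq_of_forall_le_eq {a b : ι → ℝ} {i : ι} (hab : ∀ j ≤ i, a j = b j) (ω : Ω) :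
    sol a i ω = sol b i ω := by
  induction i using WellFoundedLT.induction with
  | _ i ih =>
    rw [hsol, hsol b, hab i le_rfl]
    congr 1
    exact hdep i _ _ ω fun j hj =>
      ih j (hpar j i hj) fun k hk => hab k (hk.trans (hpar j i hj).le)

variable [DecidableEq ι]

include hpar hdep hsol in
theorem sol_update_apply_of_lt (a : ι → ℝ) {i j : ι} (c : ℝ) (hj : j < i) (ω : Ω) :
    sol (Function.update a i c) j ω = sol a j ω :=
  sol_apply_eq_of_forall_le_eq hpar hdep hsol
    (fun _ hk => Function.update_of_ne (hk.trans_lt hj).ne _ _) ω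

include hpar hdep hsol in
theorem sol_update_apply_self (a : ι → ℝ) (i : ι) (c : ℝ) (ω : Ω) :
    sol (Function.update a i c) i ω = sol a i ω + (c - a i) := by
  have hparents : F i (fun j => sol (Function.update a i c) j ω) ω =
      F i (fun j => sol a j ω) ω :=
    hdep i _ _ ω fun j hj => sol_update_apply_of_lt hpar hdep hsol a c (hpar j i hj) ω
  rw [hsol, hparents, Function.update_self, hsol a i ω]
  ring

variable [MeasurableSpace Ω] {μ : Measure Ω} [IsProbabilityMeasure μ]

include hpar hdep hsol in
theorem integral_sol_update_self {a : ι → ℝ} {i : ι} (hint : Integrable (sol a i) μ) (c : ℝ) :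
    ∫ ω, sol (Function.update a i c) i ω ∂μ = ∫ ω, sol a i ω ∂μ + (c - a i) := by
  simp_rw [sol_update_apply_self hpar hdep hsol a i c]
  rw [integral_add hint (integrable_const _)]
  simp

include hpar hdep hsol in
theorem exists_update_forall_le_integral_eq {q : ι → ℝ} {a : ι → ℝ} {i : ι}
    (hint : Integrable (sol a i) μ) (hlt : ∀ j < i, ∫ ω, sol a j ω ∂μ = q j) :
    ∃ b : ι → ℝ, (∀ j ≠ i, b j = a j) ∧ ∀ j ≤ i, ∫ ω, sol b j ω ∂μ = q j := by
  refine ⟨Function.update a i (a i + (q i - ∫ ω, sol a i ω ∂μ)),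
    fun j hj => Function.update_of_ne hj _ _, fun j hj => ?_⟩
  rcases hj.lt_or_eq with hj | rfl
  · simp_rw [sol_update_apply_of_lt hpar hdep hsol a _ hj]
    exact hlt j hj
  · rw [integral_sol_update_self hpar hdep hsol hint]
    ring

end ShiftIntervention

theorem exists_forall_lt_integral_sol_eq {p : ℕ} {Ω : Type*} [MeasurableSpace Ω]
    {μ : Measure Ω} [IsProbabilityMeasure μ] {par : Fin p → Fin p → Prop}
    {F : Fin p → (Fin p → ℝ) → Ω → ℝ} {sol : (Fin p → ℝ) → Fin p → Ω → ℝ}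
    (hpar : ∀ j i, par j i → j < i)
    (hdep : ∀ i (x y : Fin p → ℝ) ω, (∀ j, par j i → x j = y j) → F i x ω = F i y ω)
    (hsol : ∀ a i ω, sol a i ω = F i (fun j => sol a j ω) ω + a i)
    (hint : ∀ a i, Integrable (sol a i) μ) (q : Fin p → ℝ) (k : ℕ) :
    ∃ a : Fin p → ℝ, ∀ j : Fin p, (j : ℕ) < k → ∫ ω, sol a j ω ∂μ = q j := by
  induction k with
  | zero => exact ⟨0, fun j hj => absurd hj (Nat.not_lt_zero _)⟩
  | succ k ih =>
    obtain ⟨a, ha⟩ := ih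
    by_cases hk : k < p
    · obtain ⟨b, -, hb⟩ := exists_update_forall_le_integral_eq hpar hdep hsol (hint a ⟨k, hk⟩)
        fun j hj => ha j hj
      exact ⟨b, fun j hj => hb j (Nat.lt_succ_iff.mp hj)⟩
    · exact ⟨a, fun j _ => ha j (j.isLt.trans_le (not_lt.mp hk))⟩

/-- In a structural causal model on a DAG with topological order
`1 < 2 < … < p` (parents precede children), consider the iterative construction of the
matching shift intervention.  First conjunct (the inductive step): if the current shift
intervention `a` has all its targets below `i` (`a j = 0` for `j ≥ i`), already matches
the target means `q j` for all `j < i`, and fails to match at `i`, then modifying only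
the shift value at the new target `i` (which is strictly above all previous targets)
yields an intervention matching all means up to and including `i`.  Second conjunct:
the process terminates with a shift intervention matching all coordinate means exactly.
-/
theorem stmt_13 {p : ℕ} {Ω : Type*} [MeasurableSpace Ω] (μ : Measure Ω)
    [IsProbabilityMeasure μ]
    (par : Fin p → Fin p → Prop) (hpar : ∀ j i : Fin p, par j i → j < i)
    (F : Fin p → (Fin p → ℝ) → Ω → ℝ)
    (hdep : ∀ (i : Fin p) (x y : Fin p → ℝ) (ω : Ω),
      (∀ j, par j i → x j = y j) → F i x ω = F i y ω)
    (sol : (Fin p → ℝ) → Fin p → Ω → ℝ)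
    (hsol : ∀ (a : Fin p → ℝ) (i : Fin p) (ω : Ω),
      sol a i ω = F i (fun j => sol a j ω) ω + a i)
    (hint : ∀ (a : Fin p → ℝ) (i : Fin p), Integrable (sol a i) μ)
    (q : Fin p → ℝ) :
    (∀ (a : Fin p → ℝ) (i : Fin p),
        (∀ j : Fin p, j < i → (∫ ω, sol a j ω ∂μ) = q j) →
        (∀ j : Fin p, i ≤ j → a j = 0) →
        (∫ ω, sol a i ω ∂μ) ≠ q i →
        ∃ b : Fin p → ℝ, (∀ j : Fin p, j ≠ i → b j = a j) ∧
          ∀ j : Fin p, j ≤ i → (∫ ω, sol b j ω ∂μ) = q j)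
    ∧ ∃ a : Fin p → ℝ, ∀ i : Fin p, (∫ ω, sol a i ω ∂μ) = q i :=
  ⟨fun a i hlt _ _ => exists_update_forall_le_integral_eq hpar hdep hsol (hint a i) hlt,
    (exists_forall_lt_integral_sol_eq hpar hdep hsol hint q p).imp fun _ ha i => ha i i.isLt⟩
end

section
/- Let C be a connected undirected graph with an acyclic orientation D that has no v-structures, and suppose a vertex j outside C has a directed edge j → k into some vertex k of C in a larger DAG that is closed under Meek rules R1 and R2. Then j → l for every vertex l of C; in particular, j is an ancestor of the unique source of D. -/
/-!
An edge `j → b` is pushed across an undirected edge `b — c` by Meek's rule R1, as long as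
`j` and `c` are not joined by an undirected edge; the alternative `c → j` is excluded by
rule R2, since `c → j → b` together with `c — b` would still be orientable. Since the chain
component is connected and closed under undirected edges, `j → k` propagates to all of it.
-/

theorem meek_directed_of_directed_of_undirected {V : Type*} {D U : V → V → Prop}
    (hUsymm : ∀ a b : V, U a b → U b a)
    (hR1 : ∀ a b c : V, D a b → U b c → a ≠ c → (D a c ∨ D c a ∨ U a c))
    (hR2 : ∀ a b c : V, D a b → D b c → ¬ U a c)
    {j b c : V} (hjb : D j b) (hbc : U b c) (hjc : j ≠ c) (hUjc : ¬ U j c) : D j c := by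
  rcases hR1 j b c hjb hbc hjc with hjc' | hcj | hUjc'
  · exact hjc'
  · exact absurd (hUsymm b c hbc) (hR2 c j b hcj hjb)
  · exact absurd hUjc' hUjc

theorem stmt_14_general {V : Type*} (D U : V → V → Prop)
    (hUsymm : ∀ a b : V, U a b → U b a)
    (hR1 : ∀ a b c : V, D a b → U b c → a ≠ c → (D a c ∨ D c a ∨ U a c))
    (hR2 : ∀ a b c : V, D a b → D b c → ¬ U a c)
    (C : Set V)
    (hCconn : ∀ u ∈ C, ∀ v ∈ C,
      Relation.ReflTransGen (fun a b => U a b ∧ a ∈ C ∧ b ∈ C) u v)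
    (hCmax : ∀ u ∈ C, ∀ v : V, U u v → v ∈ C)
    (j : V) (hj : j ∉ C) (k : V) (hk : k ∈ C) (hjk : D j k) :
    ∀ l ∈ C, D j l := by
  intro l hl
  induction hCconn k hk l hl with
  | refl => exact hjk
  | tail _ hbc ih =>
    obtain ⟨hU, hbC, hcC⟩ := hbc
    refine meek_directed_of_directed_of_undirected hUsymm hR1 hR2 (ih hbC) hU ?_ ?_
    · rintro rfl
      exact hj hcC
    · exact fun hUjc => hj (hCmax _ hcC j (hUsymm _ _ hUjc))

/-- Consider a partially directed graph, given by a directed-edge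
relation `D` and a symmetric undirected-edge relation `U` (disjoint from `D`), which is
closed under Meek rules R1 and R2 (closure expressed as: the premise patterns cannot
leave the relevant edge undirected/absent).  Let `C` be a chain component: a set that is
connected via its internal undirected edges and closed under undirected edges.  If a
vertex `j ∉ C` has a directed edge `j → k` into some `k ∈ C`, then `j → l` for every
`l ∈ C` (in particular `j` points into the unique source of `C`). -/
theorem stmt_14 {V : Type*} (D U : V → V → Prop)
    (hUsymm : ∀ a b : V, U a b → U b a)
    (hdisj : ∀ a b : V, ¬ (D a b ∧ U a b))
    (hacyc : ∀ a : V, ¬ Relation.TransGen D a a)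
    (hR1 : ∀ a b c : V, D a b → U b c → a ≠ c → (D a c ∨ D c a ∨ U a c))
    (hR2 : ∀ a b c : V, D a b → D b c → ¬ U a c)
    (C : Set V)
    (hCconn : ∀ u ∈ C, ∀ v ∈ C,
      Relation.ReflTransGen (fun a b => U a b ∧ a ∈ C ∧ b ∈ C) u v)
    (hCmax : ∀ u ∈ C, ∀ v : V, U u v → v ∈ C)
    (j : V) (hj : j ∉ C) (k : V) (hk : k ∈ C) (hjk : D j k) :
    ∀ l ∈ C, D j l :=
  stmt_14_general D U hUsymm hR1 hR2 C hCconn hCmax j hj k hk hjk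
end

section
/- Let D be a DAG that is an orientation of a connected graph, let K be a maximal clique oriented so that its vertices are most upstream, and let k be the unique non-intervened vertex of K. If two distinct connected components T₁, T₂ of D ∖ K each contain a vertex with a directed edge into K ∖ {k}, and there is no edge between T₁ and T₂, then in any acyclic, v-structure-free completion at most one of T₁, T₂ can contain a vertex t with an edge t → k or an unoriented edge t — k. -/
/-!
Let `sᵢ ∈ Tᵢ` with `sᵢ → jᵢ`, `jᵢ ∈ K ∖ {k}`, and suppose both components have an edge into `k`.
The vertices `j₁, j₂` are adjacent, and they are distinct since `s₁ → j ← s₂` would be a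
v-structure; R1 and R2 forbid `j₁ — j₂`, so say `j₁ → j₂`. Closure under R1 and the absence of
v-structures with the parent `s₁`, which sees nothing of `T₂`, force `j₁ → s₂` and then orient
every edge of `T₂` away from `j₁`, so all of `T₂` descends from `k → j₁`. By R2 and acyclicity
no descendant `t` of `k → j₁` has `t → k` or `t — k`.
-/

open Relation

namespace PDAG

variable {V : Type*} {D U : V → V → Prop}

def Adj (D U : V → V → Prop) (a b : V) : Prop := D a b ∨ D b a ∨ U a b

theorem Adj.symm (hUsymm : ∀ a b, U a b → U b a) {a b : V} (h : Adj D U a b) :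
    Adj D U b a := by
  rcases h with h | h | h
  exacts [Or.inr (Or.inl h), Or.inl h, Or.inr (Or.inr (hUsymm _ _ h))]

theorem dir_or_adj_of_dir_of_adj (hR1 : ∀ a b c, D a b → U b c → a ≠ c → Adj D U a c)
    (hnoV : ∀ a b c, D a b → D c b → a ≠ c → Adj D U a c)
    {a x y : V} (hax : D a x) (hxy : Adj D U x y) (hay : a ≠ y) :
    D x y ∨ Adj D U a y := by
  rcases hxy with h | h | h
  · exact Or.inl h
  · exact Or.inr (hnoV a x y hax h hay)
  · exact Or.inr (hR1 a x y hax h hay)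

theorem dir_of_adj_of_nonadj_parent (hR1 : ∀ a b c, D a b → U b c → a ≠ c → Adj D U a c)
    (hnoV : ∀ a b c, D a b → D c b → a ≠ c → Adj D U a c)
    {s j y : V} (hsj : D s j) (hsy : s ≠ y) (hnadj : ¬ Adj D U s y) (hjy : Adj D U j y) :
    D j y :=
  (dir_or_adj_of_dir_of_adj hR1 hnoV hsj hjy hsy).resolve_right hnadj

theorem transGen_or_adj_of_transGen_of_adj
    (hR1 : ∀ a b c, D a b → U b c → a ≠ c → Adj D U a c)
    (hnoV : ∀ a b c, D a b → D c b → a ≠ c → Adj D U a c)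
    {j x : V} (hjx : TransGen D j x) :
    ∀ {y}, Adj D U x y → y ≠ j → TransGen D j y ∨ Adj D U j y := by
  induction hjx with
  | single hjx =>
    intro y hxy hyj
    exact (dir_or_adj_of_dir_of_adj hR1 hnoV hjx hxy hyj.symm).imp_left (.tail (.single hjx))
  | @tail w x hjw hwx ih =>
    intro y hxy hyj
    obtain rfl | hwy := eq_or_ne w y
    · exact Or.inl hjw
    rcases dir_or_adj_of_dir_of_adj hR1 hnoV hwx hxy hwy with h | h
    · exact Or.inl ((hjw.tail hwx).tail h)
    · exact ih h hyj

theorem transGen_of_reflTransGen_within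
    (hR1 : ∀ a b c, D a b → U b c → a ≠ c → Adj D U a c)
    (hnoV : ∀ a b c, D a b → D c b → a ≠ c → Adj D U a c)
    {s j x y : V} {T : Set V} (hsj : D s j) (hsT : s ∉ T) (hjT : j ∉ T)
    (hnadj : ∀ t ∈ T, ¬ Adj D U s t) (hjx : TransGen D j x)
    (hxy : ReflTransGen (fun a b => Adj D U a b ∧ a ∈ T ∧ b ∈ T) x y) :
    TransGen D j y := by
  induction hxy with
  | refl => exact hjx
  | @tail b c _ hbc ih =>
    obtain ⟨hadj, -, hc⟩ := hbc
    rcases transGen_or_adj_of_transGen_of_adj hR1 hnoV ih hadj (ne_of_mem_of_not_mem hc hjT)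
      with h | h
    · exact h
    · exact .single (dir_of_adj_of_nonadj_parent hR1 hnoV hsj
        (ne_of_mem_of_not_mem hc hsT).symm (hnadj c hc) h)

theorem transGen_of_reflTransGen_of_dir
    (hR1 : ∀ a b c, D a b → U b c → a ≠ c → Adj D U a c)
    (hnoV : ∀ a b c, D a b → D c b → a ≠ c → Adj D U a c)
    {s j s' j' t : V} {T : Set V} (hsj : D s j) (hs'j' : D s' j') (hjj' : D j j')
    (hsT : s ∉ T) (hjT : j ∉ T) (hnadj : ∀ y ∈ T, ¬ Adj D U s y) (hs'T : s' ∈ T)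
    (hs't : ReflTransGen (fun a b => Adj D U a b ∧ a ∈ T ∧ b ∈ T) s' t) :
    TransGen D j t := by
  have hjs' : D j s' := dir_of_adj_of_nonadj_parent hR1 hnoV hsj
    (ne_of_mem_of_not_mem hs'T hsT).symm (hnadj s' hs'T)
    (hnoV j j' s' hjj' hs'j' (ne_of_mem_of_not_mem hs'T hjT).symm)
  exact transGen_of_reflTransGen_within hR1 hnoV hsj hsT hjT hnadj (.single hjs') hs't

theorem not_undir_of_dir_of_transGen (hUsymm : ∀ a b, U a b → U b a)
    (hacyc : ∀ a, ¬ TransGen D a a)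
    (hR1 : ∀ a b c, D a b → U b c → a ≠ c → Adj D U a c)
    (hR2 : ∀ a b c, D a b → D b c → ¬ U a c)
    {k j x : V} (hkj : D k j) (hjx : TransGen D j x) : ¬ U x k := by
  induction hjx with
  | single hjx => exact fun h => hR2 k j _ hkj hjx (hUsymm _ _ h)
  | @tail w x hjw hwx ih =>
    intro h
    obtain rfl | hwk := eq_or_ne w k
    · exact hacyc w (.head hkj hjw)
    rcases hR1 w x k hwx h hwk with h' | h' | h'
    · exact hacyc k ((TransGen.head hkj hjw).tail h')
    · exact hR2 k w x h' hwx (hUsymm _ _ h)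
    · exact ih h'

theorem not_dir_or_undir_of_dir_of_transGen (hUsymm : ∀ a b, U a b → U b a)
    (hacyc : ∀ a, ¬ TransGen D a a)
    (hR1 : ∀ a b c, D a b → U b c → a ≠ c → Adj D U a c)
    (hR2 : ∀ a b c, D a b → D b c → ¬ U a c)
    {k j x : V} (hkj : D k j) (hjx : TransGen D j x) : ¬ (D x k ∨ U x k) := by
  rintro (h | h)
  · exact hacyc k ((TransGen.head hkj hjx).tail h)
  · exact not_undir_of_dir_of_transGen hUsymm hacyc hR1 hR2 hkj hjx h

theorem not_undir_of_dir_of_dir (hUsymm : ∀ a b, U a b → U b a)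
    (hR1 : ∀ a b c, D a b → U b c → a ≠ c → Adj D U a c)
    (hR2 : ∀ a b c, D a b → D b c → ¬ U a c)
    (hnoV : ∀ a b c, D a b → D c b → a ≠ c → Adj D U a c)
    {s₁ j₁ s₂ j₂ : V} (h₁ : D s₁ j₁) (h₂ : D s₂ j₂) (hs : s₁ ≠ s₂) (hsj : s₁ ≠ j₂)
    (hnadj : ¬ Adj D U s₁ s₂) : ¬ U j₁ j₂ := by
  intro hU
  have hj₂s₁ : D j₂ s₁ := dir_of_adj_of_nonadj_parent hR1 hnoV h₂ hs.symm
    (fun h => hnadj (h.symm hUsymm)) ((hR1 s₁ j₁ j₂ h₁ hU hsj).symm hUsymm)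
  exact hR2 j₂ s₁ j₁ hj₂s₁ h₁ (hUsymm _ _ hU)

end PDAG

open PDAG in
theorem stmt_15_general {V : Type*} (D U : V → V → Prop)
    (hUsymm : ∀ a b : V, U a b → U b a)
    (hacyc : ∀ a : V, ¬ Relation.TransGen D a a)
    (hR1 : ∀ a b c : V, D a b → U b c → a ≠ c → (D a c ∨ D c a ∨ U a c))
    (hR2 : ∀ a b c : V, D a b → D b c → ¬ U a c)
    (hnoV : ∀ a b c : V, D a b → D c b → a ≠ c → (D a c ∨ D c a ∨ U a c))
    (K : Set V)
    (hKclique : ∀ u ∈ K, ∀ v ∈ K, u ≠ v → (D u v ∨ D v u ∨ U u v))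
    (k : V)
    (hksrc : ∀ j ∈ K, j ≠ k → D k j)
    (T₁ T₂ : Set V)
    (hT₁K : ∀ t ∈ T₁, t ∉ K) (hT₂K : ∀ t ∈ T₂, t ∉ K)
    (hTdisj : ∀ t : V, ¬ (t ∈ T₁ ∧ t ∈ T₂))
    (hsep : ∀ t ∈ T₁, ∀ s ∈ T₂, ¬ (D t s ∨ D s t ∨ U t s))
    (hT₁conn : ∀ t ∈ T₁, ∀ t' ∈ T₁, Relation.ReflTransGen
      (fun a b => (D a b ∨ D b a ∨ U a b) ∧ a ∈ T₁ ∧ b ∈ T₁) t t')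
    (hT₂conn : ∀ t ∈ T₂, ∀ t' ∈ T₂, Relation.ReflTransGen
      (fun a b => (D a b ∨ D b a ∨ U a b) ∧ a ∈ T₂ ∧ b ∈ T₂) t t')
    (ht₁ : ∃ t ∈ T₁, ∃ j ∈ K, j ≠ k ∧ D t j)
    (ht₂ : ∃ t ∈ T₂, ∃ j ∈ K, j ≠ k ∧ D t j) :
    ¬ ((∃ t ∈ T₁, D t k ∨ U t k) ∧ (∃ t ∈ T₂, D t k ∨ U t k)) := by
  rintro ⟨⟨t₁, ht₁T, ht₁k⟩, ⟨t₂, ht₂T, ht₂k⟩⟩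
  obtain ⟨s₁, hs₁T, j₁, hj₁K, hj₁k, hs₁j₁⟩ := ht₁
  obtain ⟨s₂, hs₂T, j₂, hj₂K, hj₂k, hs₂j₂⟩ := ht₂
  have hs₁s₂ : s₁ ≠ s₂ := fun h => hTdisj s₁ ⟨hs₁T, h ▸ hs₂T⟩
  have hs₁T₂ : s₁ ∉ T₂ := fun h => hTdisj s₁ ⟨hs₁T, h⟩
  have hs₂T₁ : s₂ ∉ T₁ := fun h => hTdisj s₂ ⟨h, hs₂T⟩
  have hnadj₁₂ : ∀ y ∈ T₂, ¬ Adj D U s₁ y := hsep s₁ hs₁T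
  have hnadj₂₁ : ∀ y ∈ T₁, ¬ Adj D U s₂ y := fun y hy h => hsep y hy s₂ hs₂T (h.symm hUsymm)
  obtain rfl | hj := eq_or_ne j₁ j₂
  · exact hnadj₁₂ s₂ hs₂T (hnoV s₁ j₁ s₂ hs₁j₁ hs₂j₂ hs₁s₂)
  rcases hKclique j₁ hj₁K j₂ hj₂K hj with h | h | h
  · exact not_dir_or_undir_of_dir_of_transGen hUsymm hacyc hR1 hR2 (hksrc j₁ hj₁K hj₁k)
      (transGen_of_reflTransGen_of_dir hR1 hnoV hs₁j₁ hs₂j₂ h hs₁T₂ (fun h' => hT₂K j₁ h' hj₁K)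
        hnadj₁₂ hs₂T (hT₂conn s₂ hs₂T t₂ ht₂T)) ht₂k
  · exact not_dir_or_undir_of_dir_of_transGen hUsymm hacyc hR1 hR2 (hksrc j₂ hj₂K hj₂k)
      (transGen_of_reflTransGen_of_dir hR1 hnoV hs₂j₂ hs₁j₁ h hs₂T₁ (fun h' => hT₁K j₂ h' hj₂K)
        hnadj₂₁ hs₁T (hT₁conn s₁ hs₁T t₁ ht₁T)) ht₁k
  · exact not_undir_of_dir_of_dir hUsymm hR1 hR2 hnoV hs₁j₁ hs₂j₂ hs₁s₂
      (fun h' => hT₁K s₁ hs₁T (h' ▸ hj₂K)) (hnadj₁₂ s₂ hs₂T) h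

/-- Consider a (shift-)interventional essential graph: a partially
directed acyclic graph with directed edges `D` and undirected edges `U` (symmetric,
disjoint from `D`), closed under Meek rules R1 and R2, and with no v-structure among
directed edges.  Let `K` be a maximal clique whose vertices are most upstream, and
`k ∈ K` the unique non-intervened vertex of `K`, which is the source of `K`
(`k → j` for all other `j ∈ K`).  Let `T₁, T₂` be (vertex sets of) two distinct
connected components of the graph induced on `V ∖ K` with no edge between them, each
containing a vertex with a directed edge into `K ∖ {k}`.  Then at most one of `T₁, T₂`
contains a vertex `t` with a directed edge `t → k` or an unoriented edge `t — k`. -/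
theorem stmt_15 {V : Type*} (D U : V → V → Prop)
    (hUsymm : ∀ a b : V, U a b → U b a)
    (hdisj : ∀ a b : V, ¬ (D a b ∧ U a b))
    (hacyc : ∀ a : V, ¬ Relation.TransGen D a a)
    (hR1 : ∀ a b c : V, D a b → U b c → a ≠ c → (D a c ∨ D c a ∨ U a c))
    (hR2 : ∀ a b c : V, D a b → D b c → ¬ U a c)
    (hnoV : ∀ a b c : V, D a b → D c b → a ≠ c → (D a c ∨ D c a ∨ U a c))
    (K : Set V)
    (hKclique : ∀ u ∈ K, ∀ v ∈ K, u ≠ v → (D u v ∨ D v u ∨ U u v))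
    (hKmax : ∀ v : V, v ∉ K → ∃ u ∈ K, ¬ (D u v ∨ D v u ∨ U u v))
    (k : V) (hk : k ∈ K)
    (hksrc : ∀ j ∈ K, j ≠ k → D k j)
    (T₁ T₂ : Set V)
    (hT₁K : ∀ t ∈ T₁, t ∉ K) (hT₂K : ∀ t ∈ T₂, t ∉ K)
    (hTdisj : ∀ t : V, ¬ (t ∈ T₁ ∧ t ∈ T₂))
    (hsep : ∀ t ∈ T₁, ∀ s ∈ T₂, ¬ (D t s ∨ D s t ∨ U t s))
    (hT₁conn : ∀ t ∈ T₁, ∀ t' ∈ T₁, Relation.ReflTransGen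
      (fun a b => (D a b ∨ D b a ∨ U a b) ∧ a ∈ T₁ ∧ b ∈ T₁) t t')
    (hT₂conn : ∀ t ∈ T₂, ∀ t' ∈ T₂, Relation.ReflTransGen
      (fun a b => (D a b ∨ D b a ∨ U a b) ∧ a ∈ T₂ ∧ b ∈ T₂) t t')
    (hT₁closed : ∀ t ∈ T₁, ∀ u : V, (D t u ∨ D u t ∨ U t u) → u ∉ K → u ∈ T₁)
    (hT₂closed : ∀ t ∈ T₂, ∀ u : V, (D t u ∨ D u t ∨ U t u) → u ∉ K → u ∈ T₂)
    (ht₁ : ∃ t ∈ T₁, ∃ j ∈ K, j ≠ k ∧ D t j)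
    (ht₂ : ∃ t ∈ T₂, ∃ j ∈ K, j ≠ k ∧ D t j) :
    ¬ ((∃ t ∈ T₁, D t k ∨ U t k) ∧ (∃ t ∈ T₂, D t k ∨ U t k)) :=
  stmt_15_general D U hUsymm hacyc hR1 hR2 hnoV K hKclique k hksrc T₁ T₂ hT₁K hT₂K hTdisj hsep
    hT₁conn hT₂conn ht₁ ht₂
end

section
/- Under the mean interventional faithfulness assumption, every undirected edge i — j of the essential graph of G with j ∈ T and i ∉ T must be oriented as i → j in G, where T = { i : E_P(Xᵢ) ≠ E_Q(Xᵢ) }; conversely, if faithfulness fails then some edge j → i with j ∈ T, i ∉ T exists in G. -/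
/-!
Call a node unshifted when the shift vanishes on it and on all its ancestors. By well-founded
induction, unshifted nodes take the same value in the shifted and the observational model, so
their means agree; this gives the first part, since under faithfulness a parent of a node with
unchanged mean is unshifted. Conversely, if no edge leaves `T`, induction along the DAG shows
that every node outside `T` is unshifted: its parents lie outside `T` too, hence are unshifted,
so the node's value is its observational value plus its own shift, which must therefore vanish.
-/

open MeasureTheory Relation

theorem forall_reflTransGen_iff {α : Type*} {r : α → α → Prop} {P : α → Prop} {b : α} :
    (∀ a, ReflTransGen r a b → P a) ↔ P b ∧ ∀ a, TransGen r a b → P a := by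
  simp only [reflTransGen_iff_eq_or_transGen, or_imp, forall_and, forall_eq']

section StructuralEquations

variable {ι Ω M : Type*} [AddCommGroup M]

def DependsOnParents (par : ι → ι → Prop) (F : ι → (ι → M) → Ω → M) : Prop :=
  ∀ (i : ι) (x y : ι → M) (ω : Ω),
    (∀ j, par j i → x j = y j) → F i x ω = F i y ω

def SolvesShifted (F : ι → (ι → M) → Ω → M) (sol : (ι → M) → ι → Ω → M) : Prop :=
  ∀ (a : ι → M) (i : ι) (ω : Ω), sol a i ω = F i (fun j => sol a j ω) ω + a i

variable {par : ι → ι → Prop} {F : ι → (ι → M) → Ω → M} {sol : (ι → M) → ι → Ω → M}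

theorem sub_shift_eq_of_forall_parent (hF : DependsOnParents par F)
    (hsol : SolvesShifted F sol)
    {a b : ι → M} {i : ι} (h : ∀ j, par j i → sol a j = sol b j) (ω : Ω) :
    sol a i ω - a i = sol b i ω - b i := by
  rw [hsol a i ω, hsol b i ω, add_sub_cancel_right, add_sub_cancel_right]
  exact hF i _ _ ω fun j hj => congrFun (h j hj) ω

theorem sol_eq_of_forall_reflTransGen (hwf : WellFounded par) (hF : DependsOnParents par F)
    (hsol : SolvesShifted F sol) {a b : ι → M} {i : ι}
    (h : ∀ j, ReflTransGen par j i → a j = b j) : sol a i = sol b i := by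
  induction i using hwf.induction with
  | _ i ih =>
    funext ω
    have hsub := sub_shift_eq_of_forall_parent hF hsol
      (fun j hj => ih j hj fun k hk => h k (hk.tail hj)) ω
    rwa [h i .refl, sub_left_inj] at hsub

end StructuralEquations

section Means

variable {ι Ω : Type*} [MeasurableSpace Ω] {μ : Measure Ω} [IsProbabilityMeasure μ]
  {par : ι → ι → Prop} {F : ι → (ι → ℝ) → Ω → ℝ} {sol : (ι → ℝ) → ι → Ω → ℝ}

theorem integral_sol_eq_of_forall_parent (hF : DependsOnParents par F)
    (hsol : SolvesShifted F sol) {a b : ι → ℝ} {i : ι} (hint : Integrable (sol b i) μ)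
    (h : ∀ j, par j i → sol a j = sol b j) :
    ∫ ω, sol a i ω ∂μ = ∫ ω, sol b i ω ∂μ + (a i - b i) := by
  have hshift : sol a i = fun ω => sol b i ω + (a i - b i) := by
    funext ω
    linarith [sub_shift_eq_of_forall_parent hF hsol h ω]
  rw [hshift, integral_add hint (integrable_const _), integral_const, probReal_univ,
    one_smul]

theorem forall_reflTransGen_eq_zero_of_integral_eq (hwf : WellFounded par)
    (hF : DependsOnParents par F) (hsol : SolvesShifted F sol) {a : ι → ℝ}
    (hint : ∀ i, Integrable (sol 0 i) μ)
    (hclosed : ∀ j i, par j i → ∫ ω, sol 0 i ω ∂μ = ∫ ω, sol a i ω ∂μ →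
      ∫ ω, sol 0 j ω ∂μ = ∫ ω, sol a j ω ∂μ)
    (i : ι) (hi : ∫ ω, sol 0 i ω ∂μ = ∫ ω, sol a i ω ∂μ) :
    ∀ j, ReflTransGen par j i → a j = 0 := by
  induction i using hwf.induction with
  | _ i ih =>
    have hpar : ∀ j, par j i → ∀ k, ReflTransGen par k j → a k = 0 :=
      fun j hj => ih j hj (hclosed j i hj hi)
    have hai : a i = 0 := by
      have hmean := integral_sol_eq_of_forall_parent (μ := μ) hF hsol (hint i)
        fun j hj => sol_eq_of_forall_reflTransGen hwf hF hsol (b := 0) (hpar j hj)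
      rw [Pi.zero_apply, sub_zero] at hmean
      linarith
    intro j hj
    rcases hj.cases_tail with rfl | ⟨k, hjk, hki⟩
    · exact hai
    · exact hpar k hki j hjk

end Means

/-- In a structural causal model on a DAG `G` (parent relation `par`,
acyclic), let `P` be the observational distribution (solution `sol 0`) and
`Q = P^{I*}` the distribution of the matching shift intervention (solution `sol a`,
with `a i ≠ 0` iff `i` is a perturbation target).  Let
`T = { i : E_P(Xᵢ) ≠ E_Q(Xᵢ) }`.  Mean interventional faithfulness states: every `i`
with `E_P(Xᵢ) = E_Q(Xᵢ)` is neither a target (`a i = 0`) nor downstream of a target.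
First conjunct: under faithfulness, no edge `j → i` of `G` has `j ∈ T` and `i ∉ T`
(i.e. every edge between `T` and its complement points into `T`).  Second conjunct:
if faithfulness fails, then some edge `j → i` with `j ∈ T` and `i ∉ T` exists. -/
theorem stmt_16 {p : ℕ} {Ω : Type*} [MeasurableSpace Ω] (μ : Measure Ω)
    [IsProbabilityMeasure μ]
    (par : Fin p → Fin p → Prop) (hacyc : WellFounded par)
    (F : Fin p → (Fin p → ℝ) → Ω → ℝ)
    (hdep : ∀ (i : Fin p) (x y : Fin p → ℝ) (ω : Ω),
      (∀ j, par j i → x j = y j) → F i x ω = F i y ω)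
    (sol : (Fin p → ℝ) → Fin p → Ω → ℝ)
    (hsol : ∀ (a : Fin p → ℝ) (i : Fin p) (ω : Ω),
      sol a i ω = F i (fun j => sol a j ω) ω + a i)
    (hint : ∀ (a : Fin p → ℝ) (i : Fin p), Integrable (sol a i) μ)
    (a : Fin p → ℝ) :
    ((∀ i : Fin p, (∫ ω, sol (fun _ => 0) i ω ∂μ) = (∫ ω, sol a i ω ∂μ) →
        a i = 0 ∧ ∀ j : Fin p, Relation.TransGen par j i → a j = 0) →
      ∀ j i : Fin p, par j i →
        (∫ ω, sol (fun _ => 0) j ω ∂μ) ≠ (∫ ω, sol a j ω ∂μ) →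
        (∫ ω, sol (fun _ => 0) i ω ∂μ) = (∫ ω, sol a i ω ∂μ) → False)
    ∧ ((¬ ∀ i : Fin p, (∫ ω, sol (fun _ => 0) i ω ∂μ) = (∫ ω, sol a i ω ∂μ) →
        a i = 0 ∧ ∀ j : Fin p, Relation.TransGen par j i → a j = 0) →
      ∃ j i : Fin p, par j i ∧
        (∫ ω, sol (fun _ => 0) j ω ∂μ) ≠ (∫ ω, sol a j ω ∂μ) ∧
        (∫ ω, sol (fun _ => 0) i ω ∂μ) = (∫ ω, sol a i ω ∂μ)) := by
  refine ⟨fun hfaith j i hji hj hi => hj ?_, fun hunfaith => ?_⟩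
  · have hunshifted := (forall_reflTransGen_iff (P := (a · = 0))).2 (hfaith i hi)
    rw [sol_eq_of_forall_reflTransGen hacyc hdep hsol (b := a)
      fun k hk => (hunshifted k (hk.tail hji)).symm]
  · by_contra! hclosed
    refine hunfaith fun i hi => (forall_reflTransGen_iff (P := (a · = 0))).1 ?_
    exact forall_reflTransGen_eq_zero_of_integral_eq hacyc hdep hsol (hint 0)
      (fun j i hji hi => not_not.1 fun hj => hclosed j i hji hj hi) i hi
end

section
/- If two shift interventions I₁ and I₂ on a DAG G produce the same interventional mean vector, E_{P^{I₁}}(X) = E_{P^{I₂}}(X), then I₁ = I₂ (same perturbation targets and same shift values). -/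
open MeasureTheory

/-! Induct along the DAG. If the two solutions agree at every parent of `i`, the structural
equation at `i` shows that they differ there by the constant `a i - b i`; taking means, this
constant vanishes, so the solutions agree at `i` as well. -/

lemma integral_add_const_of_isProbabilityMeasure {Ω : Type*} [MeasurableSpace Ω]
    {μ : Measure Ω} [IsProbabilityMeasure μ] {f : Ω → ℝ} (hf : Integrable f μ) (c : ℝ) :
    ∫ ω, (f ω + c) ∂μ = (∫ ω, f ω ∂μ) + c := by
  rw [integral_add hf (integrable_const c), integral_const, probReal_univ, one_smul]

section ShiftIntervention

variable {ι Ω : Type*} {par : ι → ι → Prop} {F : ι → (ι → ℝ) → Ω → ℝ}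
  {sol : (ι → ℝ) → ι → Ω → ℝ}

lemma sol_eq_add_sub_of_forall_parent_eq
    (hdep : ∀ (i : ι) (x y : ι → ℝ) (ω : Ω), (∀ j, par j i → x j = y j) → F i x ω = F i y ω)
    (hsol : ∀ (a : ι → ℝ) (i : ι) (ω : Ω), sol a i ω = F i (fun j => sol a j ω) ω + a i)
    {a b : ι → ℝ} {i : ι} (hpar : ∀ j, par j i → sol a j = sol b j) (ω : Ω) :
    sol a i ω = sol b i ω + (a i - b i) := by
  have hF : F i (fun j => sol a j ω) ω = F i (fun j => sol b j ω) ω :=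
    hdep i _ _ ω fun j hj => congrFun (hpar j hj) ω
  rw [hsol a i ω, hsol b i ω, hF]
  ring

lemma sol_eq_and_shift_eq_of_integral_eq [MeasurableSpace Ω] {μ : Measure Ω}
    [IsProbabilityMeasure μ] (hacyc : WellFounded par)
    (hdep : ∀ (i : ι) (x y : ι → ℝ) (ω : Ω), (∀ j, par j i → x j = y j) → F i x ω = F i y ω)
    (hsol : ∀ (a : ι → ℝ) (i : ι) (ω : Ω), sol a i ω = F i (fun j => sol a j ω) ω + a i)
    {a b : ι → ℝ} (hint : ∀ i, Integrable (sol b i) μ)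
    (hmeans : ∀ i, ∫ ω, sol a i ω ∂μ = ∫ ω, sol b i ω ∂μ) (i : ι) :
    sol a i = sol b i ∧ a i = b i := by
  induction i using hacyc.induction with
  | _ i ih =>
    have hshift := sol_eq_add_sub_of_forall_parent_eq hdep hsol fun j hj => (ih j hj).1
    have hmean : ∫ ω, sol a i ω ∂μ = (∫ ω, sol b i ω ∂μ) + (a i - b i) := by
      rw [← integral_add_const_of_isProbabilityMeasure (hint i)]
      exact integral_congr_ae (Filter.Eventually.of_forall hshift)
    have hab : a i = b i := by linarith [hmeans i]
    exact ⟨funext fun ω => by rw [hshift ω, hab, sub_self, add_zero], hab⟩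

end ShiftIntervention

-- A shift intervention is encoded by its shift vector, which is `0` off the targets.
/-- In a structural causal model on a DAG, if two shift interventions
(encoded as shift vectors `a, b`, with value `0` on non-targets) produce the same
interventional mean vector, then they are the same intervention: same perturbation
targets and same shift values, i.e. `a = b`. -/
theorem stmt_17 {p : ℕ} {Ω : Type*} [MeasurableSpace Ω] (μ : Measure Ω)
    [IsProbabilityMeasure μ]
    (par : Fin p → Fin p → Prop) (hacyc : WellFounded par)
    (F : Fin p → (Fin p → ℝ) → Ω → ℝ)
    (hdep : ∀ (i : Fin p) (x y : Fin p → ℝ) (ω : Ω),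
      (∀ j, par j i → x j = y j) → F i x ω = F i y ω)
    (sol : (Fin p → ℝ) → Fin p → Ω → ℝ)
    (hsol : ∀ (a : Fin p → ℝ) (i : Fin p) (ω : Ω),
      sol a i ω = F i (fun j => sol a j ω) ω + a i)
    (hint : ∀ (a : Fin p → ℝ) (i : Fin p), Integrable (sol a i) μ)
    (a b : Fin p → ℝ)
    (hmeans : ∀ i : Fin p, (∫ ω, sol a i ω ∂μ) = ∫ ω, sol b i ω ∂μ) :
    a = b :=
  funext fun i =>
    (sol_eq_and_shift_eq_of_integral_eq (μ := μ) hacyc hdep hsol (hint b) hmeans i).2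
end
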